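/- arXiv:1404.1357 — 10 statements merged into one kernel-verified Lean document; each statement's English description precedes it below -/
import Mathlib

section
/- Let G be an invertible symmetric real 2×2 matrix, and let S be a real 2×2 matrix that is self-adjoint with respect to G (i.e. Sᵀ·G = G·S) and is not a scalar multiple of the identity matrix. Then every real 2×2 matrix A that is skew-adjoint with respect to G (i.e. Aᵀ·G + G·A = 0) and commutes with S (i.e. A·S = S·A) is the zero matrix. -/
open Matrix

/-- Let `G` be an invertible symmetric real 2×2 matrix, `S` a real 2×2 matrix that is
self-adjoint with respect to `G` (`Sᵀ * G = G * S`) and not a scalar multiple of the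
identity.  Then every real 2×2 matrix `A` that is skew-adjoint with respect to `G`
(`Aᵀ * G + G * A = 0`) and commutes with `S` is zero. -/
theorem stmt_0 (G S : Matrix (Fin 2) (Fin 2) ℝ)
    (hG : IsUnit G) (hGsymm : Gᵀ = G)
    (hS : Sᵀ * G = G * S)
    (hSns : ∀ c : ℝ, S ≠ c • (1 : Matrix (Fin 2) (Fin 2) ℝ)) :
    ∀ A : Matrix (Fin 2) (Fin 2) ℝ, Aᵀ * G + G * A = 0 → A * S = S * A → A = 0 := by
  intro A hA hAS
  have hdetu : IsUnit G.det := (Matrix.isUnit_iff_isUnit_det G).mp hG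
  have hdet : G.det ≠ 0 := hdetu.ne_zero
  have hb : G 1 0 = G 0 1 := by
    have := congrFun (congrFun hGsymm 0) 1
    simpa [Matrix.transpose_apply] using this
  have hdet2 : G 0 0 * G 1 1 - G 0 1 * G 0 1 ≠ 0 := by
    rw [Matrix.det_fin_two, hb] at hdet
    exact hdet
  -- scalar equations from hS (S self-adjoint wrt G)
  have hS01 := congrFun (congrFun hS 0) 1
  simp [Matrix.mul_apply, Fin.sum_univ_two, Matrix.transpose_apply, hb] at hS01
  -- scalar equations from hA (skew)
  have hA00 := congrFun (congrFun hA 0) 0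
  have hA01 := congrFun (congrFun hA 0) 1
  have hA10 := congrFun (congrFun hA 1) 0
  have hA11 := congrFun (congrFun hA 1) 1
  simp [Matrix.mul_apply, Fin.sum_univ_two, Matrix.transpose_apply, hb] at hA00 hA01 hA10 hA11
  -- scalar equations from commutation
  have hC00 := congrFun (congrFun hAS 0) 0
  have hC01 := congrFun (congrFun hAS 0) 1
  have hC10 := congrFun (congrFun hAS 1) 0
  simp [Matrix.mul_apply, Fin.sum_univ_two] at hC00 hC01 hC10
  set a := G 0 0 with ha'
  set b := G 0 1 with hb'
  set d := G 1 1 with hd'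
  set p := S 0 0
  set q := S 0 1
  set r := S 1 0
  set s := S 1 1
  set e := A 0 0
  set f := A 0 1
  set g := A 1 0
  set h := A 1 1
  -- let t be the (0,1) entry of G*A
  by_cases ht : a * f + b * h = 0
  · -- then G * A = 0, hence A = 0
    have hGA : G * A = 0 := by
      ext i j
      fin_cases i <;> fin_cases j <;>
        simp [Matrix.mul_apply, Fin.sum_univ_two, hb, ← ha', ← hb', ← hd'] <;> linarith
    calc A = G⁻¹ * (G * A) := by rw [← Matrix.mul_assoc, Matrix.nonsing_inv_mul G hdetu, Matrix.one_mul]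
    _ = 0 := by rw [hGA, Matrix.mul_zero]
  · exfalso
    set t := a * f + b * h with htdef
    have he : (a * d - b * b) * e = t * b := by
      linear_combination (d / 2) * hA00 - b * hA01
    have hf : (a * d - b * b) * f = t * d := by
      linear_combination (-(b / 2)) * hA11 - d * htdef
    have hg : (a * d - b * b) * g = -(t * a) := by
      linear_combination a * hA01 - (b / 2) * hA00
    have hh : (a * d - b * b) * h = -(t * b) := by
      linear_combination (a / 2) * hA11 + b * htdef
    have h1 : t * (a * q + d * r) = 0 := by
      linear_combination (a * d - b * b) * hC00 - r * hf + q * hg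
    have h2 : t * (2 * b * q + d * (s - p)) = 0 := by
      linear_combination (a * d - b * b) * hC01 - q * he - (s - p) * hf + q * hh
    have h3 : t * (a * (s - p) - 2 * b * r) = 0 := by
      linear_combination (a * d - b * b) * hC10 - p * hg - r * hh + r * he + s * hg
    have h1' : a * q + d * r = 0 := by
      rcases mul_eq_zero.mp h1 with h | h; exact absurd h ht; exact h
    have h2' : 2 * b * q + d * (s - p) = 0 := by
      rcases mul_eq_zero.mp h2 with h | h; exact absurd h ht; exact h
    have h3' : a * (s - p) - 2 * b * r = 0 := by
      rcases mul_eq_zero.mp h3 with h | h; exact absurd h ht; exact h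
    have hq : q = 0 := by
      have hq0 : (a * d - b * b) * q = 0 := by
        linear_combination (-(d / 2)) * hS01 + (d / 2) * h1' - (b / 2) * h2'
      rcases mul_eq_zero.mp hq0 with h | h; exact absurd h hdet2; exact h
    have hu : s - p = 0 := by
      have hu0 : (a * d - b * b) * (s - p) = 0 := by
        linear_combination a * h2' + b * hS01 - b * h1'
      rcases mul_eq_zero.mp hu0 with h | h; exact absurd h hdet2; exact h
    have hr : r = 0 := by
      have hr0 : (a * d - b * b) * r = 0 := by
        linear_combination a * h1' + (b / 2) * h3' - a * a * hq - (a * b / 2) * hu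
      rcases mul_eq_zero.mp hr0 with h | h; exact absurd h hdet2; exact h
    apply hSns p
    ext i j
    fin_cases i <;> fin_cases j <;>
      simp [Matrix.one_apply, hq, hr] <;> linarith
end

section
/- Let V be a finite-dimensional real vector space, g a nondegenerate symmetric bilinear form on V, and N : V → V a linear endomorphism that is self-adjoint with respect to g (g(Nu, v) = g(u, Nv) for all u, v). Then there is a unique bilinear form h on the image Im N such that h(Nu, Nv) = g(u, Nv) for all u, v ∈ V (in particular the right-hand side depends only on Nu and Nv), and this form h is symmetric and nondegenerate on Im N. -/
/-- Let `g` be a nondegenerate symmetric bilinear form on a finite-dimensional real vector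
space `V` and `N` a `g`-self-adjoint endomorphism.  Then there is a unique bilinear form
`h` on `Im N` with `h (N u) (N v) = g u (N v)` for all `u v`, and any such form is
symmetric and nondegenerate on `Im N`. -/
theorem stmt_2 {V : Type*} [AddCommGroup V] [Module ℝ V] [FiniteDimensional ℝ V]
    (g : V →ₗ[ℝ] V →ₗ[ℝ] ℝ)
    (hsymm : ∀ u v : V, g u v = g v u)
    (hnd : ∀ u : V, (∀ v : V, g u v = 0) → u = 0)
    (N : V →ₗ[ℝ] V)
    (hsa : ∀ u v : V, g (N u) v = g u (N v)) :
    (∃! h : (LinearMap.range N) →ₗ[ℝ] (LinearMap.range N) →ₗ[ℝ] ℝ,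
      ∀ u v : V, h ⟨N u, LinearMap.mem_range_self N u⟩ ⟨N v, LinearMap.mem_range_self N v⟩
        = g u (N v)) ∧
    ∀ h : (LinearMap.range N) →ₗ[ℝ] (LinearMap.range N) →ₗ[ℝ] ℝ,
      (∀ u v : V, h ⟨N u, LinearMap.mem_range_self N u⟩ ⟨N v, LinearMap.mem_range_self N v⟩
        = g u (N v)) →
      (∀ w w' : LinearMap.range N, h w w' = h w' w) ∧
      (∀ w : LinearMap.range N, (∀ w' : LinearMap.range N, h w w' = 0) → w = 0) := by
  classical
  set B : V →ₗ[ℝ] (LinearMap.range N →ₗ[ℝ] ℝ) :=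
    { toFun := fun u => (g u).comp (LinearMap.range N).subtype
      map_add' := by intro x y; ext w; simp
      map_smul' := by intro c x; ext w; simp } with hB
  have hker : LinearMap.ker N ≤ LinearMap.ker B := by
    intro u hu
    simp only [LinearMap.mem_ker] at hu ⊢
    ext w
    obtain ⟨v, hv⟩ := w.2
    simp only [hB, LinearMap.coe_mk, AddHom.coe_mk, LinearMap.comp_apply,
      Submodule.coe_subtype, LinearMap.zero_apply, ← hv, ← hsa, hu, LinearMap.map_zero,
      LinearMap.zero_apply]
  set h0 : (LinearMap.range N) →ₗ[ℝ] (LinearMap.range N) →ₗ[ℝ] ℝ :=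
    ((LinearMap.ker N).liftQ B hker).comp
      (LinearMap.quotKerEquivRange N).symm.toLinearMap with hh0
  have hsymmq : ∀ u : V,
      (LinearMap.quotKerEquivRange N).symm ⟨N u, LinearMap.mem_range_self N u⟩
        = Submodule.Quotient.mk u := by
    intro u
    rw [LinearEquiv.symm_apply_eq]
    exact Subtype.ext (N.quotKerEquivRange_apply_mk u).symm
  have hprop : ∀ u v : V,
      h0 ⟨N u, LinearMap.mem_range_self N u⟩ ⟨N v, LinearMap.mem_range_self N v⟩
        = g u (N v) := by
    intro u v
    simp only [hh0, LinearMap.comp_apply, LinearEquiv.coe_toLinearMap, hsymmq,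
      Submodule.liftQ_apply]
    rfl
  refine ⟨⟨h0, hprop, ?_⟩, ?_⟩
  · intro h hh
    apply LinearMap.ext
    rintro ⟨w, u, rfl⟩
    apply LinearMap.ext
    rintro ⟨w', v, rfl⟩
    exact (hh u v).trans (hprop u v).symm
  · intro h hh
    constructor
    · rintro ⟨w, u, rfl⟩ ⟨w', v, rfl⟩
      exact (hh u v).trans (((hsa u v).symm.trans (hsymm (N u) v)).trans (hh v u).symm)
    · rintro ⟨w, u, rfl⟩ hz
      have hz' : ∀ v : V, g (N u) v = 0 := by
        intro v
        rw [hsa]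
        exact (hh u v).symm.trans (hz ⟨N v, LinearMap.mem_range_self N v⟩)
      exact Subtype.ext (hnd (N u) hz')
end

section
/- Let θ be a Diophantine real number, i.e. there exist constants c > 0 and k > 0 such that |qθ − p| ≥ c/qᵏ for every integer p and every positive integer q. Then for every smooth 1-periodic function h : ℝ → ℝ there exists a smooth 1-periodic function ψ : ℝ → ℝ such that h(z) − ∫₀¹ h(t) dt = ψ(z + θ) − ψ(z) for all z ∈ ℝ. -/
/-!
Write `eₙ(x) = exp (2πinx)`. If `h = ∑ cₙ eₙ` and `ψ = ∑ bₙ eₙ`, the equation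
`ψ (z + θ) - ψ z = h z - c₀` reads `bₙ (eₙ(θ) - 1) = cₙ` for `n ≠ 0`. Since
`|eₙ(θ) - 1| = 2 |sin (π n θ)| ≥ 4 dist (nθ, ℤ)`, the Diophantine condition bounds the small
divisors below by `4c / |n|^⌈k⌉`, so dividing by them costs only a fixed power of `|n|`. As `h`
is smooth, its coefficients decay faster than any power of `|n|` (integrate by parts), hence so do
the `bₙ`, and the series `∑ bₙ eₙ` converges together with all its derivatives. Taking real parts
gives a real solution.
-/

open Real Complex Function Set Filter

section

variable {𝕜 F : Type*} [NontriviallyNormedField 𝕜] [NormedAddCommGroup F] [NormedSpace 𝕜 F]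
  {f : 𝕜 → F} {c : 𝕜}

theorem Function.Periodic.deriv (hf : Periodic f c) : Periodic (deriv f) c :=
  fun x => by rw [← deriv_comp_add_const, funext hf]

theorem Function.Periodic.iterate_deriv (hf : Periodic f c) (m : ℕ) :
    Periodic (_root_.deriv^[m] f) c := by
  induction m with
  | zero => exact hf
  | succ m ih => rw [iterate_succ_apply']; exact ih.deriv

end

theorem iteratedDeriv_const_mul_fourier (b : ℂ) (n : ℤ) (j : ℕ) :
    iteratedDeriv j (fun x : ℝ => b * fourier n (x : AddCircle (1 : ℝ)))
      = fun x : ℝ => (2 * π * I * n) ^ j * b * fourier n (x : AddCircle (1 : ℝ)) := by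
  induction j generalizing b with
  | zero => simp
  | succ j ih =>
    have hderiv : deriv (fun x : ℝ => b * fourier n (x : AddCircle (1 : ℝ)))
        = fun x : ℝ => (2 * π * I * n * b) * fourier n (x : AddCircle (1 : ℝ)) := by
      funext x
      rw [((hasDerivAt_fourier 1 n x).const_mul b).deriv]
      push_cast
      ring
    rw [iteratedDeriv_succ', hderiv, ih]
    funext x
    ring

theorem norm_iteratedFDeriv_const_mul_fourier (b : ℂ) (n : ℤ) (j : ℕ) (x : ℝ) :
    ‖iteratedFDeriv ℝ j (fun x : ℝ => b * fourier n (x : AddCircle (1 : ℝ))) x‖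
      = (2 * π * |(n : ℝ)|) ^ j * ‖b‖ := by
  rw [norm_iteratedFDeriv_eq_norm_iteratedDeriv, iteratedDeriv_const_mul_fourier]
  simp only [norm_mul, norm_pow, fourier_apply, Circle.norm_coe]
  simp [abs_of_pos pi_pos]

def RapidDecay (a : ℤ → ℂ) : Prop :=
  ∀ m : ℕ, ∃ C, ∀ n : ℤ, n ≠ 0 → |(n : ℝ)| ^ m * ‖a n‖ ≤ C

namespace RapidDecay

variable {a : ℤ → ℂ}

theorem summable_pow_mul (ha : RapidDecay a) (j : ℕ) :
    Summable fun n : ℤ => |(n : ℝ)| ^ j * ‖a n‖ := by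
  obtain ⟨C, hC⟩ := ha (j + 2)
  refine .of_norm_bounded_eventually ((summable_one_div_int_pow.mpr one_lt_two).mul_left C) ?_
  filter_upwards [eventually_cofinite_ne 0] with n hn
  have hn0 : 0 < |(n : ℝ)| := by simpa using hn
  rw [norm_of_nonneg (by positivity), mul_one_div, le_div_iff₀ (by positivity), ← sq_abs,
    mul_right_comm, ← pow_add]
  exact hC n hn

theorem div (ha : RapidDecay a) {u : ℤ → ℂ} {c : ℝ} {K : ℕ} (hc : 0 < c)
    (hu : ∀ n : ℤ, n ≠ 0 → c ≤ |(n : ℝ)| ^ K * ‖u n‖) : RapidDecay fun n => a n / u n := by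
  intro m
  obtain ⟨C, hC⟩ := ha (m + K)
  refine ⟨C / c, fun n hn => ?_⟩
  have hu0 : 0 < |(n : ℝ)| ^ K * ‖u n‖ := hc.trans_le (hu n hn)
  calc |(n : ℝ)| ^ m * ‖a n / u n‖ = |(n : ℝ)| ^ (m + K) * ‖a n‖ / (|(n : ℝ)| ^ K * ‖u n‖) := by
        rw [norm_div, pow_add]
        field_simp [(pos_of_mul_pos_right hu0 (by positivity)).ne']
    _ ≤ C / c := div_le_div₀ ((by positivity : (0 : ℝ) ≤ _).trans (hC n hn)) (hC n hn) hc (hu n hn)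

theorem summable (ha : RapidDecay a) : Summable a :=
  .of_norm <| by simpa using ha.summable_pow_mul 0

theorem summable_mul_fourier (ha : RapidDecay a) (x : AddCircle (1 : ℝ)) :
    Summable fun n => a n * fourier n x :=
  .of_norm <| by simpa [Circle.norm_coe] using ha.summable_pow_mul 0

theorem contDiff_tsum_mul_fourier (ha : RapidDecay a) :
    ContDiff ℝ (⊤ : ℕ∞) fun x : ℝ => ∑' n : ℤ, a n * fourier n (x : AddCircle (1 : ℝ)) := by
  refine contDiff_tsum (v := fun (j : ℕ) (n : ℤ) => (2 * π) ^ j * (|(n : ℝ)| ^ j * ‖a n‖))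
    (fun n => contDiff_const.mul ?_) (fun j _ => (ha.summable_pow_mul j).mul_left _)
    (fun j n x _ => by rw [norm_iteratedFDeriv_const_mul_fourier, mul_pow, mul_assoc])
  simp_rw [fourier_coe_apply]
  exact contDiff_exp.comp (contDiff_const.mul ofRealCLM.contDiff |>.div_const _)

theorem hasSum_mul_fourier_add_sub (ha : RapidDecay a) (z θ : ℝ) :
    HasSum (fun n =>
        a n * ((fourier n (θ : AddCircle (1 : ℝ)) : ℂ) - 1) * fourier n (z : AddCircle (1 : ℝ)))
      ((∑' n, a n * fourier n ((z + θ : ℝ) : AddCircle (1 : ℝ)))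
        - ∑' n, a n * fourier n (z : AddCircle (1 : ℝ))) := by
  refine ((ha.summable_mul_fourier _).hasSum.sub (ha.summable_mul_fourier _).hasSum).congr_fun
    fun n => ?_
  rw [AddCircle.coe_add, fourier_apply, fourier_apply, fourier_apply, zsmul_add,
    AddCircle.toCircle_add, Circle.coe_mul]
  ring

end RapidDecay

theorem fourierCoeffOn_zero {E : Type*} [NormedAddCommGroup E] [NormedSpace ℂ E] {a b : ℝ}
    (hab : a < b) (f : ℝ → E) : fourierCoeffOn hab f 0 = (1 / (b - a)) • ∫ x in a..b, f x := by
  simp [fourierCoeffOn_eq_integral]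

theorem norm_fourierCoeffOn_le {E : Type*} [NormedAddCommGroup E] [NormedSpace ℂ E] {a b : ℝ}
    (hab : a < b) {f : ℝ → E} {M : ℝ} (hM : ∀ x ∈ Ioc a b, ‖f x‖ ≤ M) (n : ℤ) :
    ‖fourierCoeffOn hab f n‖ ≤ M := by
  have hba : 0 < b - a := sub_pos.mpr hab
  have hint : ‖∫ x in a..b, fourier (-n) (x : AddCircle (b - a)) • f x‖ ≤ M * |b - a| :=
    intervalIntegral.norm_integral_le_of_norm_le_const fun x hx => by
      rw [uIoc_of_le hab.le] at hx
      rw [norm_smul, fourier_apply, Circle.norm_coe, one_mul]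
      exact hM x hx
  rw [fourierCoeffOn_eq_integral, norm_smul, Real.norm_eq_abs, abs_of_pos (one_div_pos.mpr hba),
    one_div_mul_eq_div, div_le_iff₀ hba]
  rwa [abs_of_pos hba] at hint

section

variable {g : ℝ → ℂ}

theorem fourierCoeffOn_deriv_of_periodic (hg : ContDiff ℝ 1 g) (hp : Periodic g 1) {n : ℤ}
    (hn : n ≠ 0) :
    fourierCoeffOn zero_lt_one (deriv g) n = 2 * π * I * n * fourierCoeffOn zero_lt_one g n := by
  have h := fourierCoeffOn_of_hasDerivAt zero_lt_one hn
    (fun x _ => (hg.differentiable one_ne_zero x).hasDerivAt)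
    ((hg.continuous_deriv le_rfl).intervalIntegrable 0 1)
  rw [h, show g 1 = g 0 by simpa using hp 0]
  have : (n : ℂ) ≠ 0 := Int.cast_ne_zero.mpr hn
  field_simp
  push_cast
  ring

theorem fourierCoeffOn_iterate_deriv_of_periodic (hg : ContDiff ℝ (⊤ : ℕ∞) g) (hp : Periodic g 1)
    (m : ℕ) {n : ℤ} (hn : n ≠ 0) :
    fourierCoeffOn zero_lt_one (deriv^[m] g) n
      = (2 * π * I * n) ^ m * fourierCoeffOn zero_lt_one g n := by
  induction m with
  | zero => simp
  | succ m ih =>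
    rw [iterate_succ_apply', fourierCoeffOn_deriv_of_periodic
      ((hg.iterate_deriv m).of_le (by simp)) (hp.iterate_deriv m) hn, ih, pow_succ]
    ring

theorem rapidDecay_fourierCoeffOn_of_periodic (hg : ContDiff ℝ (⊤ : ℕ∞) g) (hp : Periodic g 1) :
    RapidDecay (fourierCoeffOn zero_lt_one g) := by
  intro m
  obtain ⟨M, hM⟩ := isCompact_Icc.exists_bound_of_continuousOn
    (hg.iterate_deriv m).continuous.continuousOn (s := Icc (0 : ℝ) 1)
  refine ⟨M / (2 * π) ^ m, fun n hn => ?_⟩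
  have hbound := norm_fourierCoeffOn_le zero_lt_one (fun x hx => hM x (Ioc_subset_Icc_self hx)) n
  rw [fourierCoeffOn_iterate_deriv_of_periodic hg hp m hn, norm_mul, norm_pow] at hbound
  have hnorm : ‖2 * (π : ℂ) * I * n‖ = 2 * π * |(n : ℝ)| := by simp [abs_of_pos pi_pos]
  calc |(n : ℝ)| ^ m * ‖fourierCoeffOn zero_lt_one g n‖
      = ‖2 * (π : ℂ) * I * n‖ ^ m * ‖fourierCoeffOn zero_lt_one g n‖ / (2 * π) ^ m := by
        rw [hnorm, mul_pow]
        field_simp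
    _ ≤ M / (2 * π) ^ m := by gcongr

theorem hasSum_fourierCoeffOn_mul_fourier_of_periodic (hg : Continuous g) (hp : Periodic g 1)
    (hs : Summable (fourierCoeffOn zero_lt_one g)) (x : ℝ) :
    HasSum (fun n => fourierCoeffOn zero_lt_one g n * fourier n (x : AddCircle (1 : ℝ))) (g x) := by
  let G : C(AddCircle (1 : ℝ), ℂ) := ⟨hp.lift, continuous_coinduced_dom.mpr hg⟩
  have hcoeff : fourierCoeff G = fourierCoeffOn zero_lt_one g := by
    ext n
    rw [fourierCoeff_eq_intervalIntegral _ n 0, fourierCoeffOn_eq_integral]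
    norm_num
    exact intervalIntegral.integral_congr fun x _ => by simp [G, Periodic.lift_coe]
  have hsum := has_pointwise_sum_fourier_series_of_summable
    (hcoeff ▸ hs : Summable (fourierCoeff G)) (x : AddCircle (1 : ℝ))
  rw [hcoeff] at hsum
  exact hsum

end

theorem four_mul_abs_sub_round_le_norm_exp_sub_one (x : ℝ) :
    4 * |x - round x| ≤ ‖cexp (2 * π * I * x) - 1‖ := by
  set s := x - round x
  have hexp : cexp (2 * π * I * x) = cexp (I * ↑(2 * π * s)) := by
    rw [show (x : ℂ) = s + (round x : ℤ) by simp [s], mul_add, Complex.exp_add,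
      mul_comm _ ((round x : ℤ) : ℂ), exp_int_mul_two_pi_mul_I, mul_one]
    congr 1
    push_cast
    ring
  have hs : |π * s| ≤ π / 2 := by
    rw [abs_mul, abs_of_pos pi_pos]
    nlinarith [abs_sub_round x, pi_pos]
  calc 4 * |s| = 2 * (2 / π * |π * s|) := by
        rw [abs_mul, abs_of_pos pi_pos]
        field_simp
        ring
    _ ≤ 2 * |Real.sin (π * s)| := by gcongr; exact mul_abs_le_abs_sin hs
    _ = ‖cexp (2 * π * I * x) - 1‖ := by
        rw [hexp, norm_exp_I_mul_ofReal_sub_one, norm_mul, Real.norm_eq_abs, Real.norm_eq_abs,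
          abs_two, show 2 * π * s / 2 = π * s by ring]

theorem div_abs_rpow_le_abs_int_mul_sub {θ c k : ℝ}
    (hdio : ∀ (p : ℤ) (q : ℕ), 0 < q → c / (q : ℝ) ^ k ≤ |(q : ℝ) * θ - (p : ℝ)|)
    {n : ℤ} (hn : n ≠ 0) (p : ℤ) : c / |(n : ℝ)| ^ k ≤ |n * θ - p| := by
  have hq : 0 < n.natAbs := Int.natAbs_pos.mpr hn
  rcases Int.natAbs_eq n with h | h
  · rw [h]
    simpa using hdio p n.natAbs hq
  · have := hdio (-p) n.natAbs hq
    rw [h, Int.cast_neg, abs_neg, Int.cast_natCast, Nat.abs_cast,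
      show -(n.natAbs : ℝ) * θ - p = -((n.natAbs : ℝ) * θ - (-p : ℤ)) by push_cast; ring, abs_neg]
    exact this

theorem le_pow_mul_norm_fourier_sub_one {θ c k : ℝ} (hc : 0 ≤ c)
    (hdio : ∀ (p : ℤ) (q : ℕ), 0 < q → c / (q : ℝ) ^ k ≤ |(q : ℝ) * θ - (p : ℝ)|)
    {n : ℤ} (hn : n ≠ 0) :
    4 * c ≤ |(n : ℝ)| ^ ⌈k⌉₊ * ‖(fourier n (θ : AddCircle (1 : ℝ)) : ℂ) - 1‖ := by
  have h1 : 1 ≤ |(n : ℝ)| := by exact_mod_cast Int.one_le_abs hn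
  have hpow : |(n : ℝ)| ^ k ≤ |(n : ℝ)| ^ ⌈k⌉₊ := by
    rw [← Real.rpow_natCast]
    exact Real.rpow_le_rpow_of_exponent_le h1 (Nat.le_ceil k)
  have hfourier : (fourier n (θ : AddCircle (1 : ℝ)) : ℂ) = cexp (2 * π * I * ↑((n : ℝ) * θ)) := by
    rw [fourier_coe_apply]
    congr 1
    push_cast
    ring
  calc 4 * c = |(n : ℝ)| ^ ⌈k⌉₊ * (4 * (c / |(n : ℝ)| ^ ⌈k⌉₊)) := by field_simp
    _ ≤ |(n : ℝ)| ^ ⌈k⌉₊ * (4 * (c / |(n : ℝ)| ^ k)) := by gcongr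
    _ ≤ |(n : ℝ)| ^ ⌈k⌉₊ * (4 * |n * θ - round ((n : ℝ) * θ)|) := by
        gcongr
        exact div_abs_rpow_le_abs_int_mul_sub hdio hn _
    _ ≤ _ := by
        rw [hfourier]
        gcongr
        exact four_mul_abs_sub_round_le_norm_exp_sub_one _

theorem exists_contDiff_periodic_coboundary_of_diophantine {θ c k : ℝ} (hc : 0 < c)
    (hdio : ∀ (p : ℤ) (q : ℕ), 0 < q → c / (q : ℝ) ^ k ≤ |(q : ℝ) * θ - (p : ℝ)|)
    {g : ℝ → ℂ} (hg : ContDiff ℝ (⊤ : ℕ∞) g) (hp : Periodic g 1) :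
    ∃ ψ : ℝ → ℂ, ContDiff ℝ (⊤ : ℕ∞) ψ ∧ Periodic ψ 1 ∧
      ∀ z, g z - fourierCoeffOn zero_lt_one g 0 = ψ (z + θ) - ψ z := by
  let u : ℤ → ℂ := fun n => fourier n (θ : AddCircle (1 : ℝ)) - 1
  let b : ℤ → ℂ := fun n => fourierCoeffOn zero_lt_one g n / u n
  have hsmall : ∀ n : ℤ, n ≠ 0 → 4 * c ≤ |(n : ℝ)| ^ ⌈k⌉₊ * ‖u n‖ :=
    fun n hn => le_pow_mul_norm_fourier_sub_one hc.le hdio hn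
  have hb : RapidDecay b :=
    (rapidDecay_fourierCoeffOn_of_periodic hg hp).div (by positivity) hsmall
  refine ⟨fun x => ∑' n, b n * fourier n (x : AddCircle (1 : ℝ)), hb.contDiff_tsum_mul_fourier,
    fun x => by simp only [AddCircle.coe_add_period], fun z => ?_⟩
  -- `u 0 = 0`, so `b 0 = 0` by the convention `x / 0 = 0`.
  have hterm : (fun n => b n * u n * fourier n (z : AddCircle (1 : ℝ))) =
      update (fun n => fourierCoeffOn zero_lt_one g n * fourier n (z : AddCircle (1 : ℝ))) 0 0 := by
    funext n
    rcases eq_or_ne n 0 with rfl | hn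
    · simp [u]
    · have hu : u n ≠ 0 := norm_pos_iff.mp <| pos_of_mul_pos_right
        ((by positivity : (0 : ℝ) < 4 * c).trans_le (hsmall n hn)) (by positivity)
      rw [update_of_ne hn, div_mul_cancel₀ _ hu]
  have hinv := hasSum_fourierCoeffOn_mul_fourier_of_periodic hg.continuous hp
    (rapidDecay_fourierCoeffOn_of_periodic hg hp).summable z
  have hshift := hb.hasSum_mul_fourier_add_sub z θ
  rw [hterm] at hshift
  rw [← (hinv.update 0 0).unique hshift]
  simp only [fourier_zero, mul_one]
  ring

/-- Kolmogorov's theorem: if `θ` is Diophantine, then for every smooth 1-periodic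
function `h : ℝ → ℝ` there is a smooth 1-periodic `ψ` with
`h z - ∫₀¹ h = ψ (z + θ) - ψ z` for all `z`. -/
theorem stmt_4 (θ : ℝ)
    (hθ : ∃ c : ℝ, 0 < c ∧ ∃ k : ℝ, 0 < k ∧
      ∀ (p : ℤ) (q : ℕ), 0 < q → c / (q : ℝ) ^ k ≤ |(q : ℝ) * θ - (p : ℝ)|)
    (h : ℝ → ℝ) (hsmooth : ContDiff ℝ (⊤ : ℕ∞) h) (hper : ∀ z : ℝ, h (z + 1) = h z) :
    ∃ ψ : ℝ → ℝ, ContDiff ℝ (⊤ : ℕ∞) ψ ∧ (∀ z : ℝ, ψ (z + 1) = ψ z) ∧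
      ∀ z : ℝ, h z - ∫ t in (0:ℝ)..1, h t = ψ (z + θ) - ψ z := by
  obtain ⟨c, hc, k, -, hdio⟩ := hθ
  obtain ⟨ψ, hψ, hψper, hψeq⟩ := exists_contDiff_periodic_coboundary_of_diophantine hc hdio
    (g := fun t => (h t : ℂ)) (ofRealCLM.contDiff.comp hsmooth) (fun z => congrArg ofReal (hper z))
  refine ⟨fun x => (ψ x).re, reCLM.contDiff.comp hψ, fun z => congrArg re (hψper z), fun z => ?_⟩
  have hre := congrArg re (hψeq z)
  rw [fourierCoeffOn_zero, intervalIntegral.integral_ofReal] at hre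
  simpa using hre
end

section
/- Let θ be an irrational real number which is not Diophantine, i.e. for all c > 0 and k > 0 there exist an integer p and a positive integer q with |qθ − p| < c/qᵏ. Then there exists a smooth 1-periodic function h : ℝ → ℝ with ∫₀¹ h(t) dt = 0 such that no smooth 1-periodic function ψ : ℝ → ℝ satisfies ψ(z + θ) − ψ(z) = h(z) for all z ∈ ℝ. -/
/-!
An irrational number that is not Diophantine is a Liouville number, so there are `q j > 2 ^ j`
and `p j` with `|q j * θ - p j| < 1 / q j ^ (j + 2)`. The lacunary series
`h t = ∑ j, cos (2 * π * q j * t) / q j ^ (j + 1)` has coefficients decaying faster than any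
power of its frequencies, hence is smooth, and it has mean zero. If `ψ (· + θ) - ψ = h` with `ψ`
continuous and 1-periodic, pairing with `cos (2 * π * q j * t)` and moving the shift onto the
cosine bounds this Fourier coefficient of `h`, which is at least `1 / (2 * q j ^ (j + 1))`, by
`2 * π * sup |ψ| * |q j * θ - p j|`. Hence `q j ≤ 4 * π * sup |ψ|` for every `j`, which is absurd.
-/

open Real Filter MeasureTheory Function

lemma Irrational.liouville_of_forall_exists_abs_mul_sub_lt {θ : ℝ} (hirr : Irrational θ)
    (hθ : ∀ c : ℝ, 0 < c → ∀ k : ℝ, 0 < k →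
      ∃ (p : ℤ) (q : ℕ), 0 < q ∧ |(q : ℝ) * θ - (p : ℝ)| < c / (q : ℝ) ^ k) :
    Liouville θ := by
  intro n
  set c := |θ - round θ|
  have hc : 0 < c := abs_pos.2 (sub_ne_zero.2 (hirr.ne_int _))
  have hc1 : c ≤ 1 := (abs_sub_round θ).trans (by norm_num)
  obtain ⟨p, q, hq, hlt⟩ := hθ c hc (n + 1) (by positivity)
  rw [show (n : ℝ) + 1 = ((n + 1 : ℕ) : ℝ) by push_cast; ring, Real.rpow_natCast] at hlt
  have hq1 : (1 : ℝ) ≤ q := by exact_mod_cast hq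
  have hq0 : (0 : ℝ) < q := by positivity
  have hq_ne_one : q ≠ 1 := by
    rintro rfl
    simp only [Nat.cast_one, one_mul, one_pow, div_one] at hlt
    exact hlt.not_ge (round_le θ p)
  refine ⟨p, q, by exact_mod_cast (by omega : 1 < q), ?_, ?_⟩
  · push_cast
    exact_mod_cast hirr.ne_rat (p / q)
  · push_cast
    calc |θ - p / q| = |q * θ - p| / q := by
          rw [← abs_of_pos hq0, ← abs_div, abs_of_pos hq0, sub_div, mul_div_cancel_left₀ _ hq0.ne']
      _ < c / (q : ℝ) ^ (n + 1) / q := by gcongr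
      _ ≤ 1 / (q : ℝ) ^ n := by
        rw [div_div, ← pow_succ]
        exact div_le_div₀ zero_le_one hc1 (by positivity) (pow_le_pow_right₀ hq1 (by omega))

lemma Liouville.exists_nat_gt_abs_mul_sub_lt {x : ℝ} (hx : Liouville x) (N k : ℕ) :
    ∃ q : ℕ, N < q ∧ ∃ p : ℤ, |q * x - p| < 1 / (q : ℝ) ^ k := by
  obtain ⟨q, hq, p, -, hlt⟩ := (hx.frequently_exists_num (k + 1)).forall_exists_of_atTop (N + 1)
  have hq0 : (0 : ℝ) < q := by exact_mod_cast (by omega : 0 < q)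
  refine ⟨q, by omega, p, ?_⟩
  calc |q * x - p| = q * |x - p / q| := by
        rw [← abs_of_pos hq0, ← abs_mul, abs_of_pos hq0, mul_sub, mul_div_cancel₀ _ hq0.ne']
    _ < q * (1 / (q : ℝ) ^ (k + 1)) := by gcongr
    _ = 1 / (q : ℝ) ^ k := by field_simp; ring

lemma norm_iteratedFDeriv_mul_cos_mul_le (a b : ℝ) (k : ℕ) (x : ℝ) :
    ‖iteratedFDeriv ℝ k (fun t => a * cos (b * t)) x‖ ≤ |a| * |b| ^ k := by
  rw [norm_iteratedFDeriv_eq_norm_iteratedDeriv, iteratedDeriv_const_mul_field,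
    iteratedDeriv_comp_const_mul contDiff_cos, Real.norm_eq_abs, abs_mul, abs_mul, abs_pow]
  gcongr
  exact mul_le_of_le_one_right (by positivity) (abs_iteratedDeriv_cos_le_one k (b * x))

lemma contDiff_tsum_mul_cos_mul {a b : ℕ → ℝ}
    (h : ∀ k : ℕ, Summable fun i => |a i| * |b i| ^ k) :
    ContDiff ℝ (⊤ : ℕ∞) fun t => ∑' i, a i * cos (b i * t) :=
  contDiff_tsum (f := fun i t => a i * cos (b i * t))
    (fun _ => contDiff_const.mul (contDiff_cos.comp (contDiff_const.mul contDiff_id)))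
    (fun k _ => h k) (fun k i x _ => norm_iteratedFDeriv_mul_cos_mul_le (a i) (b i) k x)

lemma intervalIntegral.integral_tsum_of_norm_le {ι E : Type*} [Countable ι]
    [NormedAddCommGroup E] [NormedSpace ℝ E] [CompleteSpace E] {F : ι → ℝ → E} {M : ι → ℝ}
    (a b : ℝ) (hF : ∀ i, Continuous (F i)) (hM : Summable M) (hFM : ∀ i t, ‖F i t‖ ≤ M i) :
    ∫ t in a..b, ∑' i, F i t = ∑' i, ∫ t in a..b, F i t :=
  (intervalIntegral.hasSum_integral_of_dominated_convergence (fun i _ => M i)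
    (fun i => (hF i).aestronglyMeasurable) (fun i => ae_of_all _ fun t _ => hFM i t)
    (ae_of_all _ fun _ _ => hM) intervalIntegrable_const
    (ae_of_all _ fun t _ => (hM.of_norm_bounded (fun i => hFM i t)).hasSum)).tsum_eq.symm

lemma periodic_cos_two_pi_nat_mul (n : ℕ) : Periodic (fun t => cos (2 * π * n * t)) 1 := by
  intro t
  simp only [show 2 * π * n * (t + 1) = 2 * π * n * t + (n : ℤ) * (2 * π) by push_cast; ring,
    cos_add_int_mul_two_pi]

lemma integral_cos_two_pi_int_mul (k : ℤ) :
    ∫ t in (0 : ℝ)..1, cos (2 * π * k * t) = if k = 0 then 1 else 0 := by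
  split_ifs with hk
  · simp [hk]
  · have hc : 2 * π * k ≠ 0 := by positivity
    rw [intervalIntegral.integral_comp_mul_left (fun t => cos t) hc, integral_cos, mul_one,
      mul_zero, sin_zero, show 2 * π * k = (2 * k : ℤ) * π by push_cast; ring, sin_int_mul_pi]
    simp

lemma integral_cos_two_pi_nat_mul_mul_cos {m : ℕ} (hm : 0 < m) (n : ℕ) :
    ∫ t in (0 : ℝ)..1, cos (2 * π * m * t) * cos (2 * π * n * t)
      = if m = n then 1 / 2 else 0 := by
  have hprod : ∀ t, cos (2 * π * m * t) * cos (2 * π * n * t)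
      = (cos (2 * π * ((m - n : ℤ) : ℝ) * t) + cos (2 * π * ((m + n : ℤ) : ℝ) * t)) / 2 := by
    intro t
    have := two_mul_cos_mul_cos (2 * π * m * t) (2 * π * n * t)
    push_cast
    rw [show 2 * π * (m - n) * t = 2 * π * m * t - 2 * π * n * t by ring,
      show 2 * π * (m + n) * t = 2 * π * m * t + 2 * π * n * t by ring]
    linarith
  simp_rw [hprod]
  rw [intervalIntegral.integral_div,
    intervalIntegral.integral_add (Continuous.intervalIntegrable (by fun_prop) _ _)
      (Continuous.intervalIntegrable (by fun_prop) _ _),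
    integral_cos_two_pi_int_mul, integral_cos_two_pi_int_mul,
    if_neg (by omega : (m + n : ℤ) ≠ 0)]
  simp only [sub_eq_zero, Nat.cast_inj]
  split_ifs <;> norm_num

lemma Function.Periodic.intervalIntegral_comp_add_mul_eq {ψ g : ℝ → ℝ} (hψ : Periodic ψ 1)
    (hg : Periodic g 1) (θ : ℝ) :
    ∫ t in (0 : ℝ)..1, ψ (t + θ) * g t = ∫ t in (0 : ℝ)..1, ψ t * g (t - θ) := by
  have hper : Periodic (fun t => ψ t * g (t - θ)) 1 := by
    intro t
    simp only [hψ t, show t + 1 - θ = t - θ + 1 by ring, hg (t - θ)]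
  calc ∫ t in (0 : ℝ)..1, ψ (t + θ) * g t
      = ∫ t in (0 : ℝ)..1, (fun s => ψ s * g (s - θ)) (t + θ) := by simp
    _ = ∫ t in θ..θ + 1, ψ t * g (t - θ) := by
      rw [intervalIntegral.integral_comp_add_right (fun s => ψ s * g (s - θ)), zero_add, add_comm]
    _ = ∫ t in (0 : ℝ)..1, ψ t * g (t - θ) := by simpa using hper.intervalIntegral_add_eq θ 0

lemma abs_cos_two_pi_nat_mul_sub_sub_cos_le (n : ℕ) (p : ℤ) (t θ : ℝ) :
    |cos (2 * π * n * (t - θ)) - cos (2 * π * n * t)| ≤ 2 * π * |n * θ - p| := by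
  rw [← cos_add_int_mul_two_pi _ p]
  refine (abs_cos_sub_cos_le _ _).trans_eq ?_
  rw [show 2 * π * n * (t - θ) + p * (2 * π) - 2 * π * n * t = -(2 * π * (n * θ - p)) by ring,
    abs_neg, abs_mul, abs_of_pos two_pi_pos]

lemma abs_integral_mul_cos_le_of_coboundary {ψ f : ℝ → ℝ} {θ M : ℝ} (hψ : Continuous ψ)
    (hper : Periodic ψ 1) (hf : ∀ z, ψ (z + θ) - ψ z = f z) (hM : ∀ t, |ψ t| ≤ M)
    (n : ℕ) (p : ℤ) :
    |∫ t in (0 : ℝ)..1, f t * cos (2 * π * n * t)| ≤ M * (2 * π * |n * θ - p|) := by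
  have hint : ∀ g : ℝ → ℝ, Continuous g → IntervalIntegrable g volume 0 1 :=
    fun g hg => hg.intervalIntegrable 0 1
  have hshift : ∫ t in (0 : ℝ)..1, f t * cos (2 * π * n * t)
      = ∫ t in (0 : ℝ)..1, ψ t * (cos (2 * π * n * (t - θ)) - cos (2 * π * n * t)) := by
    simp_rw [← hf, sub_mul, mul_sub (ψ _)]
    rw [intervalIntegral.integral_sub (hint _ (by fun_prop)) (hint _ (by fun_prop)),
      hper.intervalIntegral_comp_add_mul_eq (periodic_cos_two_pi_nat_mul n) θ,
      intervalIntegral.integral_sub (hint _ (by fun_prop)) (hint _ (by fun_prop))]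
  have hpt : ∀ t, ‖ψ t * (cos (2 * π * n * (t - θ)) - cos (2 * π * n * t))‖
      ≤ M * (2 * π * |n * θ - p|) := fun t => by
    rw [norm_mul, Real.norm_eq_abs, Real.norm_eq_abs]
    exact mul_le_mul (hM t) (abs_cos_two_pi_nat_mul_sub_sub_cos_le n p t θ) (abs_nonneg _)
      ((abs_nonneg _).trans (hM t))
  simpa [hshift] using
    intervalIntegral.norm_integral_le_of_norm_le_const (a := 0) (b := 1) fun t _ => hpt t

noncomputable def lacunaryCosSeries (q : ℕ → ℕ) (t : ℝ) : ℝ :=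
  ∑' j, ((q j : ℝ) ^ (j + 1))⁻¹ * cos (2 * π * q j * t)

lemma periodic_lacunaryCosSeries (q : ℕ → ℕ) : Periodic (lacunaryCosSeries q) 1 := fun t =>
  tsum_congr fun j => congrArg _ (periodic_cos_two_pi_nat_mul (q j) t)

section

variable {q : ℕ → ℕ}

lemma summable_pow_div_pow_succ (hq : ∀ j, 2 ^ j < q j) (k : ℕ) :
    Summable fun j => (q j : ℝ) ^ k / (q j : ℝ) ^ (j + 1) := by
  refine summable_geometric_two.of_norm_bounded_eventually_nat ?_
  filter_upwards [eventually_ge_atTop k] with j hj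
  have h2 : (2 : ℝ) ^ j < q j := by exact_mod_cast hq j
  have h1 : (1 : ℝ) ≤ q j := (one_le_pow₀ one_le_two).trans h2.le
  rw [Real.norm_of_nonneg (by positivity)]
  calc (q j : ℝ) ^ k / (q j : ℝ) ^ (j + 1) ≤ (q j : ℝ) ^ j / (q j : ℝ) ^ (j + 1) := by gcongr
    _ = 1 / q j := by field_simp; ring
    _ ≤ (1 / 2) ^ j := by rw [one_div_pow]; gcongr

lemma summable_inv_pow_succ (hq : ∀ j, 2 ^ j < q j) :
    Summable fun j => ((q j : ℝ) ^ (j + 1))⁻¹ := by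
  simpa using summable_pow_div_pow_succ hq 0

lemma contDiff_lacunaryCosSeries (hq : ∀ j, 2 ^ j < q j) :
    ContDiff ℝ (⊤ : ℕ∞) (lacunaryCosSeries q) := by
  refine contDiff_tsum_mul_cos_mul fun k => ?_
  refine ((summable_pow_div_pow_succ hq k).mul_left ((2 * π) ^ k)).congr fun j => ?_
  rw [abs_inv, abs_pow, Nat.abs_cast, abs_mul, abs_of_pos two_pi_pos, Nat.abs_cast, mul_pow]
  ring

lemma integral_lacunaryCosSeries_mul_cos (hq : ∀ j, 2 ^ j < q j) (n : ℕ) :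
    ∫ t in (0 : ℝ)..1, lacunaryCosSeries q t * cos (2 * π * n * t)
      = ∑' j, ((q j : ℝ) ^ (j + 1))⁻¹ * if q j = n then 1 / 2 else 0 := by
  simp_rw [lacunaryCosSeries, ← tsum_mul_right]
  rw [intervalIntegral.integral_tsum_of_norm_le _ _ (fun j => by fun_prop)
    (summable_inv_pow_succ hq)]
  · refine tsum_congr fun j => ?_
    simp only [mul_assoc ((q j : ℝ) ^ (j + 1))⁻¹]
    rw [intervalIntegral.integral_const_mul,
      integral_cos_two_pi_nat_mul_mul_cos ((Nat.zero_le _).trans_lt (hq j))]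
  · intro j t
    rw [norm_mul, norm_mul, norm_inv, norm_pow, Real.norm_natCast, Real.norm_eq_abs,
      Real.norm_eq_abs, mul_assoc]
    exact mul_le_of_le_one_right (by positivity)
      (mul_le_one₀ (abs_cos_le_one _) (abs_nonneg _) (abs_cos_le_one _))

lemma integral_lacunaryCosSeries (hq : ∀ j, 2 ^ j < q j) :
    ∫ t in (0 : ℝ)..1, lacunaryCosSeries q t = 0 := by
  simpa [((Nat.zero_le _).trans_lt (hq _)).ne'] using integral_lacunaryCosSeries_mul_cos hq 0

lemma inv_pow_succ_div_two_le_integral_lacunaryCosSeries_mul_cos (hq : ∀ j, 2 ^ j < q j)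
    (j : ℕ) :
    ((q j : ℝ) ^ (j + 1))⁻¹ / 2
      ≤ ∫ t in (0 : ℝ)..1, lacunaryCosSeries q t * cos (2 * π * q j * t) := by
  rw [integral_lacunaryCosSeries_mul_cos hq]
  have hsum : Summable fun i => ((q i : ℝ) ^ (i + 1))⁻¹ * if q i = q j then 1 / 2 else 0 :=
    (summable_inv_pow_succ hq).of_nonneg_of_le (fun i => by positivity)
      (fun i => mul_le_of_le_one_right (by positivity) (by split_ifs <;> norm_num))
  simpa [div_eq_mul_inv] using hsum.le_tsum j (fun i _ => by positivity)

end

/-- Converse part of Kolmogorov's theorem: if `θ` is irrational and not Diophantine,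
then there is a smooth 1-periodic function `h` of zero mean such that the cohomological
equation `ψ (z + θ) - ψ z = h z` has no smooth 1-periodic solution `ψ`. -/
theorem stmt_5 (θ : ℝ) (hirr : Irrational θ)
    (hθ : ∀ c : ℝ, 0 < c → ∀ k : ℝ, 0 < k →
      ∃ (p : ℤ) (q : ℕ), 0 < q ∧ |(q : ℝ) * θ - (p : ℝ)| < c / (q : ℝ) ^ k) :
    ∃ h : ℝ → ℝ, ContDiff ℝ (⊤ : ℕ∞) h ∧ (∀ z : ℝ, h (z + 1) = h z) ∧
      (∫ t in (0:ℝ)..1, h t) = 0 ∧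
      ¬ ∃ ψ : ℝ → ℝ, ContDiff ℝ (⊤ : ℕ∞) ψ ∧ (∀ z : ℝ, ψ (z + 1) = ψ z) ∧
        ∀ z : ℝ, ψ (z + θ) - ψ z = h z := by
  choose q hq p hp using fun j : ℕ =>
    (hirr.liouville_of_forall_exists_abs_mul_sub_lt hθ).exists_nat_gt_abs_mul_sub_lt (2 ^ j) (j + 2)
  refine ⟨lacunaryCosSeries q, contDiff_lacunaryCosSeries hq, periodic_lacunaryCosSeries q,
    integral_lacunaryCosSeries hq, ?_⟩
  rintro ⟨ψ, hψ, hper, hcoh⟩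
  obtain ⟨M, hM⟩ :=
    (Periodic.isBounded_of_continuous hper one_ne_zero hψ.continuous).exists_norm_le
  have hM0 : 0 ≤ M := (norm_nonneg _).trans (hM _ ⟨0, rfl⟩)
  obtain ⟨j, hj⟩ := pow_unbounded_of_one_lt (4 * π * M) one_lt_two
  have hqj : (2 : ℝ) ^ j < q j := by exact_mod_cast hq j
  have hbound : ((q j : ℝ) ^ (j + 1))⁻¹ / 2 ≤ M * (2 * π * (1 / (q j : ℝ) ^ (j + 2))) :=
    (inv_pow_succ_div_two_le_integral_lacunaryCosSeries_mul_cos hq j).trans <|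
      (le_abs_self _).trans <|
        (abs_integral_mul_cos_le_of_coboundary hψ.continuous hper hcoh (fun t => hM _ ⟨t, rfl⟩)
          (q j) (p j)).trans (by gcongr; exact (hp j).le)
  have hqM : (q j : ℝ) ≤ 4 * π * M := by
    have hq0 : (0 : ℝ) < q j := (pow_pos two_pos j).trans hqj
    rw [pow_succ _ (j + 1)] at hbound
    field_simp at hbound
    nlinarith
  linarith
end

section
/- Let n ∈ ℕ and c₁, c₂ ∈ [0,1). Let V̄, W̄ : ℝ² → ℝ² be smooth ℤ²-periodic vector fields that are linearly independent at every point, satisfy [V̄, W̄] = 0, have det(V̄, W̄) > 0 everywhere, and satisfy ∫_{[0,1]²} det(V̄(y,z), W̄(y,z))⁻¹ dy dz = 1. Let π : ℝ³ → ℝ² be π(x,y,z) = (y,z) and let ∂x denote the constant vector field (1,0,0) on ℝ³. Then there exist smooth vector fields V, W : ℝ³ → ℝ³ such that: (i) V and W are Γ_{n,c₁,c₂}-invariant, i.e. Dγ_p(V(p)) = V(γ(p)) and Dγ_p(W(p)) = W(γ(p)) for every γ ∈ Γ_{n,c₁,c₂} and every p ∈ ℝ³; (ii) Dπ(V(p))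 = V̄(π(p)) and Dπ(W(p)) = W̄(π(p)) for all p; (iii) [V, ∂x] = [W, ∂x] = 0 and [V, W] = n·∂x. Moreover, a pair of smooth vector fields (V', W') satisfies (i)–(iii) if and only if there exists a smooth closed ℤ²-periodic 1-form β on ℝ² such that V' = V + (β(V̄)∘π)·∂x and W' = W + (β(W̄)∘π)·∂x. -/
/-!
A `Γ`-invariant field on `ℝ³` that commutes with `∂x` and projects to `V̄` has the form
`(A ∘ π) ∂x + V̄ ∘ π`; invariance under the generators of `Γ` says exactly that
`A (y + 1, z) = A (y, z)` and `A (y, z + 1) = A (y, z) + n V̄₁ (y, z)`, and `[V, W] = n ∂x`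
says `dA(W̄) - dB(V̄) = n`. This reduces everything to the plane.

For a 1-form `β`, Cartan's formula and `[V̄, W̄] = 0` give
`d(β(V̄))(W̄) - d(β(W̄))(V̄) = -(dβ / dy ∧ dz) · det(V̄, W̄)`. So `A = δ(V̄)`, `B = δ(W̄)` is
a solution as soon as `dδ = -n det(V̄, W̄)⁻¹ dy ∧ dz` and `δ` has the right
(quasi-)periodicity; such a `δ` is obtained by integrating the density `det(V̄, W̄)⁻¹` first
in `z` and then in `y`, and its total mass `1` is what makes the second component periodic.
Conversely, the difference of two solutions is `(β(V̄), β(W̄))` for the periodic form `β`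
obtained by Cramer's rule, and the same formula shows that `β` is closed.
-/

noncomputable section

def affMap (φ : ℝ × ℝ → ℝ) (ψ : ℝ → ℝ) (b : ℝ) : Equiv.Perm (ℝ × ℝ × ℝ) where
  toFun p := (p.1 + φ p.2, p.2.1 + ψ p.2.2, p.2.2 + b)
  invFun p := (p.1 - φ (p.2.1 - ψ (p.2.2 - b), p.2.2 - b), p.2.1 - ψ (p.2.2 - b), p.2.2 - b)
  left_inv := by rintro ⟨x, y, z⟩; simp
  right_inv := by rintro ⟨x, y, z⟩; simp

def Gamma (n : ℕ) (c₁ c₂ : ℝ) : Subgroup (Equiv.Perm (ℝ × ℝ × ℝ)) :=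
  Subgroup.closure
    { affMap (fun _ => 1) (fun _ => 0) 0,
      affMap (fun _ => c₁) (fun _ => 1) 0,
      affMap (fun q => n * q.1 + c₂) (fun _ => 0) 1 }

def lie3 (V W : ℝ × ℝ × ℝ → ℝ × ℝ × ℝ) : ℝ × ℝ × ℝ → ℝ × ℝ × ℝ :=
  fun p => fderiv ℝ V p (W p) - fderiv ℝ W p (V p)

def lie2 (V W : ℝ × ℝ → ℝ × ℝ) : ℝ × ℝ → ℝ × ℝ :=
  fun p => fderiv ℝ V p (W p) - fderiv ℝ W p (V p)

def GammaInvariant (n : ℕ) (c₁ c₂ : ℝ) (V : ℝ × ℝ × ℝ → ℝ × ℝ × ℝ) : Prop :=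
  ∀ γ ∈ Gamma n c₁ c₂, ∀ p : ℝ × ℝ × ℝ, fderiv ℝ (⇑γ) p (V p) = V (γ p)

/-- Conditions (i)–(iii); the differential of `π (x, y, z) = (y, z)` is the second projection. -/
def LiftConds (n : ℕ) (c₁ c₂ : ℝ) (Vb Wb : ℝ × ℝ → ℝ × ℝ)
    (V W : ℝ × ℝ × ℝ → ℝ × ℝ × ℝ) : Prop :=
  ContDiff ℝ (⊤ : ℕ∞) V ∧ ContDiff ℝ (⊤ : ℕ∞) W ∧
  GammaInvariant n c₁ c₂ V ∧ GammaInvariant n c₁ c₂ W ∧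
  (∀ p : ℝ × ℝ × ℝ, (V p).2 = Vb p.2) ∧ (∀ p : ℝ × ℝ × ℝ, (W p).2 = Wb p.2) ∧
  (lie3 V (fun _ => (1, 0, 0)) = fun _ => 0) ∧
  (lie3 W (fun _ => (1, 0, 0)) = fun _ => 0) ∧
  (lie3 V W = fun _ => ((n : ℝ), 0, 0))

open Function intervalIntegral MeasureTheory
open scoped ContDiff

section ParametricIntegral

variable {H G : Type*} [NormedAddCommGroup H] [NormedSpace ℝ H] [FiniteDimensional ℝ H]
  [NormedAddCommGroup G] [NormedSpace ℝ G]

theorem hasFDerivAt_parametric_intervalIntegral_of_contDiff {F : H → ℝ → G}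
    (hF : ContDiff ℝ 1 (uncurry F)) (a b : ℝ) (x₀ : H) :
    HasFDerivAt (fun x => ∫ t in a..b, F x t)
      (∫ t in a..b, (fderiv ℝ (uncurry F) (x₀, t)).comp (ContinuousLinearMap.inl ℝ H ℝ)) x₀ := by
  have hF' : Continuous fun p : H × ℝ =>
      (fderiv ℝ (uncurry F) p).comp (ContinuousLinearMap.inl ℝ H ℝ) :=
    (hF.continuous_fderiv one_ne_zero).clm_comp continuous_const
  obtain ⟨C, hC⟩ := ((isCompact_closedBall x₀ 1).prod isCompact_uIcc).exists_bound_of_continuousOn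
    (hF'.continuousOn (s := Metric.closedBall x₀ 1 ×ˢ Set.uIcc a b))
  have : SecondCountableTopologyEither ℝ (H →L[ℝ] G) := secondCountableTopologyEither_of_left _ _
  exact hasFDerivAt_integral_of_dominated_of_fderiv_le (Metric.ball_mem_nhds x₀ one_pos)
    (.of_forall fun x => (hF.continuous.uncurry_left x).aestronglyMeasurable)
    ((hF.continuous.uncurry_left x₀).intervalIntegrable a b)
    ((hF'.uncurry_left x₀).aestronglyMeasurable)
    (ae_of_all _ fun t ht x hx =>
      hC (x, t) ⟨Metric.ball_subset_closedBall hx, Set.uIoc_subset_uIcc ht⟩)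
    intervalIntegrable_const
    (ae_of_all _ fun t _ x _ => HasFDerivAt.comp (g := uncurry F) (f := fun x => (x, t)) x
      ((hF.differentiable one_ne_zero) (x, t)).hasFDerivAt (hasFDerivAt_prodMk_left x t))

theorem contDiff_parametric_intervalIntegral_of_contDiff {F : H → ℝ → G}
    (hF : ContDiff ℝ ∞ (uncurry F)) (a b : ℝ) :
    ContDiff ℝ ∞ (fun x => ∫ t in a..b, F x t) := by
  refine contDiff_infty.2 fun m => ?_
  induction m generalizing F with
  | zero =>
    exact contDiff_zero.2 (continuous_parametric_intervalIntegral_of_continuous' hF.continuous a b)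
  | succ m ih =>
    have hF1 : ContDiff ℝ 1 (uncurry F) := hF.of_le (by exact_mod_cast le_top)
    rw [Nat.cast_succ, contDiff_succ_iff_fderiv_apply]
    refine ⟨fun x =>
      (hasFDerivAt_parametric_intervalIntegral_of_contDiff hF1 a b x).differentiableAt,
      fun h => by simp at h, fun v => ?_⟩
    have hD : ContDiff ℝ ∞ fun p : H × ℝ => fderiv ℝ (uncurry F) p (v, 0) :=
      (hF.fderiv_right (by simp)).clm_apply contDiff_const
    convert ih (F := fun x t => fderiv ℝ (uncurry F) (x, t) (v, 0)) hD using 1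
    funext x
    rw [(hasFDerivAt_parametric_intervalIntegral_of_contDiff hF1 a b x).fderiv,
      ContinuousLinearMap.intervalIntegral_apply]
    · rfl
    · exact (((hF.continuous_fderiv (by simp)).comp
        (continuous_const.prodMk continuous_id)).clm_comp
        continuous_const).intervalIntegrable a b

theorem contDiff_parametric_primitive_of_contDiff {F : H → ℝ → G}
    (hF : ContDiff ℝ ∞ (uncurry F)) (a : ℝ) :
    ContDiff ℝ ∞ (fun p : H × ℝ => ∫ t in a..p.2, F p.1 t) := by
  have key : (fun p : H × ℝ => ∫ t in a..p.2, F p.1 t) =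
      fun p => (p.2 - a) • ∫ s in (0:ℝ)..1, F p.1 ((p.2 - a) * s + a) := by
    funext p
    rw [smul_integral_comp_mul_add]
    simp
  rw [key]
  refine (contDiff_snd.sub contDiff_const).smul
    (contDiff_parametric_intervalIntegral_of_contDiff
      (F := fun (p : H × ℝ) s => F p.1 ((p.2 - a) * s + a)) ?_ 0 1)
  exact hF.comp (f := fun p : (H × ℝ) × ℝ => (p.1.1, (p.1.2 - a) * p.2 + a))
    ((contDiff_fst.comp contDiff_fst).prodMk
      ((((contDiff_snd.comp contDiff_fst).sub contDiff_const).mul contDiff_snd).add contDiff_const))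

end ParametricIntegral

def IsZ2Periodic {α : Type*} (f : ℝ × ℝ → α) : Prop :=
  ∀ y z : ℝ, f (y + 1, z) = f (y, z) ∧ f (y, z + 1) = f (y, z)

def IsTwistedPeriodic (n : ℕ) (X : ℝ × ℝ → ℝ × ℝ) (A : ℝ × ℝ → ℝ) : Prop :=
  ∀ y z : ℝ, A (y + 1, z) = A (y, z) ∧ A (y, z + 1) = A (y, z) + n * (X (y, z)).1

theorem IsZ2Periodic.apply_add_int {α : Type*} {f : ℝ × ℝ → α} (hf : IsZ2Periodic f)
    (k l : ℤ) (y z : ℝ) : f (y + k, z + l) = f (y, z) := by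
  have hy : Periodic (fun y => f (y, z + l)) 1 := fun y => (hf y _).1
  have hz : Periodic (fun z => f (y, z)) 1 := fun z => (hf y z).2
  calc f (y + k, z + l) = f (y, z + l) := by simpa using hy.int_mul k y
    _ = f (y, z) := by simpa using hz.int_mul l z

theorem IsTwistedPeriodic.apply_add_int {n : ℕ} {X : ℝ × ℝ → ℝ × ℝ} {A : ℝ × ℝ → ℝ}
    (hA : IsTwistedPeriodic n X A) (hX : IsZ2Periodic X) (k l : ℤ) (y z : ℝ) :
    A (y + k, z + l) = A (y, z) + n * l * (X (y, z)).1 := by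
  have hy : Periodic (fun y => A (y, z + l)) 1 := fun y => (hA y _).1
  -- `A` minus the linear drift `n z X₁` is periodic in `z`.
  have hz : Periodic (fun z => A (y, z) - n * z * (X (y, z)).1) 1 := fun z => by
    simp only [(hA y z).2, (hX y z).2]
    ring
  have hXz : X (y, z + l) = X (y, z) := by simpa using hX.apply_add_int 0 l y z
  have := hz.int_mul l z
  simp only [mul_one, hXz] at this
  calc A (y + k, z + l) = A (y, z + l) := by simpa using hy.int_mul k y
    _ = A (y, z) + n * l * (X (y, z)).1 := by linear_combination this

def pairing (β₁ β₂ : ℝ × ℝ → ℝ) (X : ℝ × ℝ → ℝ × ℝ) (q : ℝ × ℝ) : ℝ :=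
  β₁ q * (X q).1 + β₂ q * (X q).2

/-- `d(β₁ dy + β₂ dz) = curl2 β₁ β₂ dy ∧ dz`. -/
def curl2 (β₁ β₂ : ℝ × ℝ → ℝ) (q : ℝ × ℝ) : ℝ :=
  fderiv ℝ β₂ q (1, 0) - fderiv ℝ β₁ q (0, 1)

def det2 (u v : ℝ × ℝ) : ℝ := u.1 * v.2 - u.2 * v.1

theorem ContinuousLinearMap.apply_eq_fst_mul_add_snd_mul (L : ℝ × ℝ →L[ℝ] ℝ) (v : ℝ × ℝ) :
    L v = v.1 * L (1, 0) + v.2 * L (0, 1) := by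
  conv_lhs => rw [show v = v.1 • ((1 : ℝ), (0 : ℝ)) + v.2 • ((0 : ℝ), (1 : ℝ)) by ext <;> simp]
  rw [map_add, map_smul, map_smul, smul_eq_mul, smul_eq_mul]

theorem fderiv_pairing_apply {β₁ β₂ : ℝ × ℝ → ℝ} {X : ℝ × ℝ → ℝ × ℝ} {q : ℝ × ℝ}
    (hβ₁ : DifferentiableAt ℝ β₁ q) (hβ₂ : DifferentiableAt ℝ β₂ q)
    (hX : DifferentiableAt ℝ X q) (v : ℝ × ℝ) :
    fderiv ℝ (pairing β₁ β₂ X) q v = fderiv ℝ β₁ q v * (X q).1 + β₁ q * (fderiv ℝ X q v).1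
      + (fderiv ℝ β₂ q v * (X q).2 + β₂ q * (fderiv ℝ X q v).2) := by
  have h := (hβ₁.hasFDerivAt.mul hX.hasFDerivAt.fst).add (hβ₂.hasFDerivAt.mul hX.hasFDerivAt.snd)
  rw [(show HasFDerivAt (pairing β₁ β₂ X) _ q from h).fderiv]
  simp only [add_apply, smul_apply, ContinuousLinearMap.comp_apply, ContinuousLinearMap.coe_fst',
    ContinuousLinearMap.coe_snd', smul_eq_mul]
  ring

/-- Cartan's formula `dβ(X, Y) = X(β Y) - Y(β X) - β [X, Y]`, with `lie2 X Y = -[X, Y]`. -/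
theorem fderiv_pairing_sub_fderiv_pairing {β₁ β₂ : ℝ × ℝ → ℝ} {X Y : ℝ × ℝ → ℝ × ℝ}
    {q : ℝ × ℝ} (hβ₁ : DifferentiableAt ℝ β₁ q) (hβ₂ : DifferentiableAt ℝ β₂ q)
    (hX : DifferentiableAt ℝ X q) (hY : DifferentiableAt ℝ Y q) :
    fderiv ℝ (pairing β₁ β₂ X) q (Y q) - fderiv ℝ (pairing β₁ β₂ Y) q (X q)
      = pairing β₁ β₂ (lie2 X Y) q - curl2 β₁ β₂ q * det2 (X q) (Y q) := by
  rw [fderiv_pairing_apply hβ₁ hβ₂ hX, fderiv_pairing_apply hβ₁ hβ₂ hY,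
    (fderiv ℝ β₁ q).apply_eq_fst_mul_add_snd_mul (X q),
    (fderiv ℝ β₁ q).apply_eq_fst_mul_add_snd_mul (Y q),
    (fderiv ℝ β₂ q).apply_eq_fst_mul_add_snd_mul (X q),
    (fderiv ℝ β₂ q).apply_eq_fst_mul_add_snd_mul (Y q)]
  simp only [pairing, lie2, curl2, det2, Prod.fst_sub, Prod.snd_sub]
  ring

theorem ContDiff.pairing {β₁ β₂ : ℝ × ℝ → ℝ} {X : ℝ × ℝ → ℝ × ℝ} (hβ₁ : ContDiff ℝ ∞ β₁)
    (hβ₂ : ContDiff ℝ ∞ β₂) (hX : ContDiff ℝ ∞ X) : ContDiff ℝ ∞ (pairing β₁ β₂ X) :=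
  (hβ₁.mul (contDiff_fst.comp hX)).add (hβ₂.mul (contDiff_snd.comp hX))

theorem IsZ2Periodic.pairing {β₁ β₂ : ℝ × ℝ → ℝ} {X : ℝ × ℝ → ℝ × ℝ} (hβ₁ : IsZ2Periodic β₁)
    (hβ₂ : IsZ2Periodic β₂) (hX : IsZ2Periodic X) : IsZ2Periodic (pairing β₁ β₂ X) :=
  fun y z => ⟨by simp only [_root_.pairing, (hβ₁ y z).1, (hβ₂ y z).1, (hX y z).1],
    by simp only [_root_.pairing, (hβ₁ y z).2, (hβ₂ y z).2, (hX y z).2]⟩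

theorem fderiv_pairing_sub_of_lie2_eq_zero {β₁ β₂ : ℝ × ℝ → ℝ} {X Y : ℝ × ℝ → ℝ × ℝ}
    (hβ₁ : Differentiable ℝ β₁) (hβ₂ : Differentiable ℝ β₂) (hX : Differentiable ℝ X)
    (hY : Differentiable ℝ Y)
    (hcomm : lie2 X Y = fun _ => 0) (q : ℝ × ℝ) :
    fderiv ℝ (pairing β₁ β₂ X) q (Y q) - fderiv ℝ (pairing β₁ β₂ Y) q (X q)
      = -(curl2 β₁ β₂ q * det2 (X q) (Y q)) := by
  rw [fderiv_pairing_sub_fderiv_pairing (hβ₁ q) (hβ₂ q) (hX q) (hY q), hcomm]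
  simp [pairing]

theorem fderiv_apply_zero_one_of_hasDerivAt {f : ℝ × ℝ → ℝ} {q : ℝ × ℝ} {d : ℝ}
    (hf : DifferentiableAt ℝ f q) (h : HasDerivAt (fun t => f (q.1, t)) d q.2) :
    fderiv ℝ f q (0, 1) = d :=
  (hf.hasFDerivAt.comp_hasDerivAt q.2
    ((hasDerivAt_const q.2 q.1).prodMk (hasDerivAt_id q.2))).unique h

theorem fderiv_apply_one_zero_of_hasDerivAt {f : ℝ × ℝ → ℝ} {q : ℝ × ℝ} {d : ℝ}
    (hf : DifferentiableAt ℝ f q) (h : HasDerivAt (fun t => f (t, q.2)) d q.1) :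
    fderiv ℝ f q (1, 0) = d :=
  (hf.hasFDerivAt.comp_hasDerivAt q.1
    ((hasDerivAt_id q.1).prodMk (hasDerivAt_const q.1 q.2))).unique h

theorem exists_curl2_eq_neg {g : ℝ × ℝ → ℝ} (hg : ContDiff ℝ ∞ g) (hper : IsZ2Periodic g)
    (hmass : ∫ y in (0:ℝ)..1, ∫ z in (0:ℝ)..1, g (y, z) = 1) :
    ∃ α₁ α₂ : ℝ × ℝ → ℝ, ContDiff ℝ ∞ α₁ ∧ ContDiff ℝ ∞ α₂ ∧
      (∀ y z : ℝ, α₁ (y + 1, z) = α₁ (y, z) ∧ α₁ (y, z + 1) = α₁ (y, z) + 1) ∧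
      IsZ2Periodic α₂ ∧ ∀ q, curl2 α₁ α₂ q = -g q := by
  set k : ℝ → ℝ := fun y => ∫ t in (0:ℝ)..1, g (y, t) with hk_def
  set P : ℝ × ℝ → ℝ := fun q => ∫ t in (0:ℝ)..q.2, g (q.1, t) with hP_def
  have hk : ContDiff ℝ ∞ k :=
    contDiff_parametric_intervalIntegral_of_contDiff (F := fun y t => g (y, t)) hg 0 1
  have hP : ContDiff ℝ ∞ P :=
    contDiff_parametric_primitive_of_contDiff (F := fun y t => g (y, t)) hg 0
  have hK : ContDiff ℝ ∞ fun y => ∫ t in (0:ℝ)..y, k t :=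
    (contDiff_parametric_primitive_of_contDiff (H := ℝ) (F := fun _ t => k t)
      (hk.comp contDiff_snd) 0).comp ((contDiff_const (c := (0:ℝ))).prodMk contDiff_id)
  have hg_int (y : ℝ) (a b : ℝ) : IntervalIntegrable (fun t => g (y, t)) volume a b :=
    (hg.continuous.comp (continuous_const.prodMk continuous_id)).intervalIntegrable a b
  have hk_per : Periodic k 1 := fun y => by simp only [hk_def, (hper y _).1]
  -- over a full period, the `z`-primitive of `g` gains `k y`, and that of `k` gains the mass `1`
  have hP_add_one (y z : ℝ) : P (y, z + 1) = P (y, z) + k y := by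
    simpa using (Periodic.intervalIntegral_add_eq_add (fun t => (hper y t).2) 0 z (hg_int y))
  have hK_add_one (y : ℝ) : ∫ t in (0:ℝ)..y + 1, k t = (∫ t in (0:ℝ)..y, k t) + 1 := by
    rw [hk_per.intervalIntegral_add_eq_add 0 y (fun a b => hk.continuous.intervalIntegrable a b),
      zero_add, hmass]
  refine ⟨fun q => P q + q.2 * (1 - k q.1), fun q => q.1 - ∫ t in (0:ℝ)..q.1, k t,
    hP.add (contDiff_snd.mul (contDiff_const.sub (hk.comp contDiff_fst))),
    contDiff_fst.sub (hK.comp contDiff_fst), fun y z => ⟨?_, ?_⟩, fun y z => ⟨?_, rfl⟩, fun q => ?_⟩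
  · simp only [hP_def, hk_per y, (hper _ _).1]
  · simp only [hP_add_one]
    ring
  · simp only [hK_add_one]
    ring
  · have h₁ : fderiv ℝ (fun q => P q + q.2 * (1 - k q.1)) q (0, 1) = g q + (1 - k q.1) := by
      refine fderiv_apply_zero_one_of_hasDerivAt
        ((hP.add (contDiff_snd.mul (contDiff_const.sub (hk.comp contDiff_fst)))).differentiable
          (by simp) q) ?_
      exact ((hg.continuous.comp (continuous_const.prodMk continuous_id)).integral_hasStrictDerivAt
        0 q.2).hasDerivAt.add (hasDerivAt_mul_const (1 - k q.1))
    have h₂ : fderiv ℝ (fun q : ℝ × ℝ => q.1 - ∫ t in (0:ℝ)..q.1, k t) q (1, 0) = 1 - k q.1 :=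
      fderiv_apply_one_zero_of_hasDerivAt
        ((contDiff_fst.sub (hK.comp contDiff_fst)).differentiable (by simp) q)
        ((hasDerivAt_id q.1).sub (hk.continuous.integral_hasStrictDerivAt 0 q.1).hasDerivAt)
    rw [curl2, h₁, h₂]
    ring

def liftField (A : ℝ × ℝ → ℝ) (X : ℝ × ℝ → ℝ × ℝ) (p : ℝ × ℝ × ℝ) : ℝ × ℝ × ℝ :=
  (A p.2, X p.2)

section LiftField

variable {A B : ℝ × ℝ → ℝ} {X Y : ℝ × ℝ → ℝ × ℝ}

theorem ContDiff.liftField (hA : ContDiff ℝ ∞ A) (hX : ContDiff ℝ ∞ X) :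
    ContDiff ℝ ∞ (liftField A X) :=
  (hA.comp contDiff_snd).prodMk (hX.comp contDiff_snd)

theorem liftField_add (f : ℝ × ℝ → ℝ) (p : ℝ × ℝ × ℝ) :
    liftField (A + f) X p = liftField A X p + f p.2 • ((1:ℝ), (0:ℝ), (0:ℝ)) := by
  simp [liftField]

theorem fderiv_liftField_apply (hA : Differentiable ℝ A) (hX : Differentiable ℝ X)
    (p v : ℝ × ℝ × ℝ) :
    fderiv ℝ (liftField A X) p v = (fderiv ℝ A p.2 v.2, fderiv ℝ X p.2 v.2) := by
  rw [(show HasFDerivAt (liftField A X) _ p from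
    ((hA p.2).hasFDerivAt.comp p hasFDerivAt_snd).prodMk
      ((hX p.2).hasFDerivAt.comp p hasFDerivAt_snd)).fderiv]
  rfl

theorem lie3_liftField (hA : Differentiable ℝ A) (hB : Differentiable ℝ B)
    (hX : Differentiable ℝ X) (hY : Differentiable ℝ Y) :
    lie3 (liftField A X) (liftField B Y)
      = fun p => (fderiv ℝ A p.2 (Y p.2) - fderiv ℝ B p.2 (X p.2), lie2 X Y p.2) := by
  funext p
  simp only [lie3, fderiv_liftField_apply hA hX, fderiv_liftField_apply hB hY]
  rfl

theorem lie3_liftField_const (hA : Differentiable ℝ A) (hX : Differentiable ℝ X) :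
    lie3 (liftField A X) (fun _ => ((1:ℝ), (0:ℝ), (0:ℝ))) = fun _ => 0 := by
  funext p
  simp [lie3, fderiv_liftField_apply hA hX, Prod.mk_zero_zero]

theorem eq_liftField_of_lie3_eq_zero {V : ℝ × ℝ × ℝ → ℝ × ℝ × ℝ} (hV : Differentiable ℝ V)
    (h : lie3 V (fun _ => ((1:ℝ), (0:ℝ), (0:ℝ))) = fun _ => 0) :
    V = liftField (fun q => (V (0, q)).1) (fun q => (V (0, q)).2) := by
  funext ⟨x, q⟩
  have hline (t : ℝ) : HasDerivAt (fun t : ℝ => V (t, q)) 0 t := by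
    have h' := (hV (t, q)).hasFDerivAt.comp_hasDerivAt t
      ((hasDerivAt_id t).prodMk (hasDerivAt_const t q))
    have hx : fderiv ℝ V (t, q) ((1:ℝ), (0 : ℝ × ℝ)) = 0 := by
      simpa [lie3, Prod.mk_zero_zero] using congrFun h (t, q)
    rwa [hx] at h'
  exact is_const_of_deriv_eq_zero (fun t => (hline t).differentiableAt)
    (fun t => (hline t).deriv) x 0

end LiftField

def IsShear (n : ℕ) (γ : Equiv.Perm (ℝ × ℝ × ℝ)) (k l : ℤ) (r : ℝ) : Prop :=
  ∀ p : ℝ × ℝ × ℝ, γ p = (p.1 + n * l * p.2.1 + r, p.2.1 + k, p.2.2 + l)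

def shearGroup (n : ℕ) : Subgroup (Equiv.Perm (ℝ × ℝ × ℝ)) where
  carrier := {γ | ∃ k l r, IsShear n γ k l r}
  one_mem' := ⟨0, 0, 0, fun p => by simp⟩
  mul_mem' := by
    rintro γ δ ⟨k, l, r, hγ⟩ ⟨k', l', r', hδ⟩
    refine ⟨k + k', l + l', r + r' + n * l * k', fun p => ?_⟩
    rw [Equiv.Perm.mul_apply, hδ, hγ]
    push_cast
    ext <;> simp only <;> ring
  inv_mem' := by
    rintro γ ⟨k, l, r, hγ⟩
    refine ⟨-k, -l, n * l * k - r, fun p => γ.injective ?_⟩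
    rw [Equiv.Perm.coe_inv, Equiv.apply_symm_apply, hγ]
    push_cast
    ext <;> simp only <;> ring

theorem Gamma_le_shearGroup (n : ℕ) (c₁ c₂ : ℝ) : Gamma n c₁ c₂ ≤ shearGroup n := by
  rw [Gamma, Subgroup.closure_le]
  rintro γ (rfl | rfl | rfl)
  · exact ⟨0, 0, 1, fun p => by simp [affMap]⟩
  · exact ⟨1, 0, c₁, fun p => by simp [affMap]⟩
  · exact ⟨0, 1, c₂, fun p => by simp [affMap, add_assoc]⟩

section Shear

variable {n : ℕ} {γ : Equiv.Perm (ℝ × ℝ × ℝ)} {k l : ℤ} {r : ℝ}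

theorem IsShear.fderiv_apply (h : IsShear n γ k l r) (p v : ℝ × ℝ × ℝ) :
    fderiv ℝ γ p v = (v.1 + n * l * v.2.1, v.2) := by
  let L : (ℝ × ℝ × ℝ) →L[ℝ] ℝ × ℝ × ℝ :=
    (.fst ℝ ℝ (ℝ × ℝ) + ((n : ℝ) * l) • (ContinuousLinearMap.fst ℝ ℝ ℝ).comp (.snd ℝ ℝ (ℝ × ℝ))
      ).prod (.snd ℝ ℝ (ℝ × ℝ))
  have hγ : ⇑γ = fun p => L p + ((r, k, l) : ℝ × ℝ × ℝ) := by
    funext p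
    rw [h p]
    ext <;> simp [L]
  rw [hγ, (L.hasFDerivAt.add_const _).fderiv]
  simp [L]

theorem IsShear.fderiv_liftField_eq_iff (h : IsShear n γ k l r) {A : ℝ × ℝ → ℝ}
    {X : ℝ × ℝ → ℝ × ℝ} :
    (∀ p, fderiv ℝ γ p (liftField A X p) = liftField A X (γ p)) ↔
      ∀ y z : ℝ, A (y + k, z + l) = A (y, z) + n * l * (X (y, z)).1 ∧
        X (y + k, z + l) = X (y, z) := by
  constructor
  · intro H y z
    have := H (0, y, z)
    rw [h.fderiv_apply, h] at this
    simp only [liftField, Prod.mk.injEq] at this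
    exact ⟨this.1.symm, this.2.symm⟩
  · intro H p
    rw [h.fderiv_apply, h]
    simp only [liftField, Prod.mk.injEq]
    exact ⟨(H p.2.1 p.2.2).1.symm, (H p.2.1 p.2.2).2.symm⟩

end Shear

theorem gammaInvariant_liftField_iff {n : ℕ} {c₁ c₂ : ℝ} {A : ℝ × ℝ → ℝ} {X : ℝ × ℝ → ℝ × ℝ} :
    GammaInvariant n c₁ c₂ (liftField A X) ↔ IsZ2Periodic X ∧ IsTwistedPeriodic n X A := by
  constructor
  · intro hinv
    have h₂ : IsShear n (affMap (fun _ => c₁) (fun _ => 1) 0) 1 0 c₁ := fun p => by simp [affMap]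
    have h₃ : IsShear n (affMap (fun q => n * q.1 + c₂) (fun _ => 0) 1) 0 1 c₂ := fun p => by
      simp [affMap, add_assoc]
    have hy := h₂.fderiv_liftField_eq_iff.1 (hinv _ (Subgroup.subset_closure (by simp)))
    have hz := h₃.fderiv_liftField_eq_iff.1 (hinv _ (Subgroup.subset_closure (by simp)))
    simp only [Int.cast_one, Int.cast_zero, add_zero, mul_zero, zero_mul, mul_one] at hy hz
    exact ⟨fun y z => ⟨(hy y z).2, (hz y z).2⟩, fun y z => ⟨(hy y z).1, (hz y z).1⟩⟩
  · rintro ⟨hX, hA⟩ γ hγ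
    obtain ⟨k, l, r, h⟩ := Gamma_le_shearGroup n c₁ c₂ hγ
    exact h.fderiv_liftField_eq_iff.2 fun y z =>
      ⟨hA.apply_add_int hX k l y z, hX.apply_add_int k l y z⟩

structure IsLiftPotential (n : ℕ) (Vb Wb : ℝ × ℝ → ℝ × ℝ) (A B : ℝ × ℝ → ℝ) : Prop where
  contDiff₁ : ContDiff ℝ ∞ A
  contDiff₂ : ContDiff ℝ ∞ B
  twisted₁ : IsTwistedPeriodic n Vb A
  twisted₂ : IsTwistedPeriodic n Wb B
  bracket : ∀ q, fderiv ℝ A q (Wb q) - fderiv ℝ B q (Vb q) = n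

structure IsClosedPeriodicForm (β₁ β₂ : ℝ × ℝ → ℝ) : Prop where
  contDiff₁ : ContDiff ℝ ∞ β₁
  contDiff₂ : ContDiff ℝ ∞ β₂
  periodic₁ : IsZ2Periodic β₁
  periodic₂ : IsZ2Periodic β₂
  closed : ∀ p, fderiv ℝ β₂ p (1, 0) = fderiv ℝ β₁ p (0, 1)

section LiftPotential

variable {n : ℕ} {Vb Wb : ℝ × ℝ → ℝ × ℝ}

theorem liftConds_iff (hVb : ContDiff ℝ ∞ Vb) (hWb : ContDiff ℝ ∞ Wb) (hVbper : IsZ2Periodic Vb)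
    (hWbper : IsZ2Periodic Wb) (hcomm : lie2 Vb Wb = fun _ => 0) {c₁ c₂ : ℝ}
    {V W : ℝ × ℝ × ℝ → ℝ × ℝ × ℝ} :
    LiftConds n c₁ c₂ Vb Wb V W ↔
      ∃ A B, IsLiftPotential n Vb Wb A B ∧ V = liftField A Vb ∧ W = liftField B Wb := by
  have hVbd := hVb.differentiable (by simp)
  have hWbd := hWb.differentiable (by simp)
  constructor
  · rintro ⟨hV, hW, hVinv, hWinv, hVπ, hWπ, hVx, hWx, hVW⟩
    have hV' : V = liftField (fun q => (V (0, q)).1) Vb := by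
      rw [eq_liftField_of_lie3_eq_zero (hV.differentiable (by simp)) hVx]
      exact congrArg _ (funext fun q => hVπ (0, q))
    have hW' : W = liftField (fun q => (W (0, q)).1) Wb := by
      rw [eq_liftField_of_lie3_eq_zero (hW.differentiable (by simp)) hWx]
      exact congrArg _ (funext fun q => hWπ (0, q))
    have hA : ContDiff ℝ ∞ fun q => (V (0, q)).1 :=
      contDiff_fst.comp (hV.comp (contDiff_const.prodMk contDiff_id))
    have hB : ContDiff ℝ ∞ fun q => (W (0, q)).1 :=
      contDiff_fst.comp (hW.comp (contDiff_const.prodMk contDiff_id))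
    rw [hV', gammaInvariant_liftField_iff] at hVinv
    rw [hW', gammaInvariant_liftField_iff] at hWinv
    refine ⟨_, _, ⟨hA, hB, hVinv.2, hWinv.2, fun q => ?_⟩, hV', hW'⟩
    have := congrArg Prod.fst (congrFun hVW (0, q))
    rwa [hV', hW', lie3_liftField (hA.differentiable (by simp)) (hB.differentiable (by simp))
      hVbd hWbd] at this
  · rintro ⟨A, B, hAB, rfl, rfl⟩
    have hAd := hAB.contDiff₁.differentiable (by simp)
    have hBd := hAB.contDiff₂.differentiable (by simp)
    refine ⟨hAB.contDiff₁.liftField hVb, hAB.contDiff₂.liftField hWb,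
      gammaInvariant_liftField_iff.2 ⟨hVbper, hAB.twisted₁⟩,
      gammaInvariant_liftField_iff.2 ⟨hWbper, hAB.twisted₂⟩, fun _ => rfl, fun _ => rfl,
      lie3_liftField_const hAd hVbd, lie3_liftField_const hBd hWbd, ?_⟩
    rw [lie3_liftField hAd hBd hVbd hWbd, hcomm]
    funext p
    rw [hAB.bracket]
    rfl

theorem exists_isLiftPotential (n : ℕ) (hVb : ContDiff ℝ ∞ Vb) (hWb : ContDiff ℝ ∞ Wb)
    (hVbper : IsZ2Periodic Vb) (hWbper : IsZ2Periodic Wb) (hcomm : lie2 Vb Wb = fun _ => 0)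
    (hdet : ∀ q, det2 (Vb q) (Wb q) ≠ 0)
    (hvol : ∫ y in (0:ℝ)..1, ∫ z in (0:ℝ)..1, (det2 (Vb (y, z)) (Wb (y, z)))⁻¹ = 1) :
    ∃ A B, IsLiftPotential n Vb Wb A B := by
  have hg : ContDiff ℝ ∞ fun q => (det2 (Vb q) (Wb q))⁻¹ :=
    (((contDiff_fst.comp hVb).mul (contDiff_snd.comp hWb)).sub
      ((contDiff_snd.comp hVb).mul (contDiff_fst.comp hWb))).inv hdet
  have hgper : IsZ2Periodic fun q => (det2 (Vb q) (Wb q))⁻¹ := fun y z =>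
    ⟨by simp only [(hVbper y z).1, (hWbper y z).1], by simp only [(hVbper y z).2, (hWbper y z).2]⟩
  obtain ⟨α₁, α₂, hα₁, hα₂, hα₁per, hα₂per, hcurl⟩ := exists_curl2_eq_neg hg hgper hvol
  have hd := fderiv_pairing_sub_of_lie2_eq_zero (hα₁.differentiable (by simp))
    (hα₂.differentiable (by simp)) (hVb.differentiable (by simp)) (hWb.differentiable (by simp))
    hcomm
  refine ⟨fun q => n * pairing α₁ α₂ Vb q, fun q => n * pairing α₁ α₂ Wb q,
    contDiff_const.mul (hα₁.pairing hα₂ hVb), contDiff_const.mul (hα₁.pairing hα₂ hWb),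
    fun y z => ⟨?_, ?_⟩, fun y z => ⟨?_, ?_⟩, fun q => ?_⟩
  · simp only [pairing, (hα₁per y z).1, (hα₂per y z).1, (hVbper y z).1]
  · simp only [pairing, (hα₁per y z).2, (hα₂per y z).2, (hVbper y z).2]
    ring
  · simp only [pairing, (hα₁per y z).1, (hα₂per y z).1, (hWbper y z).1]
  · simp only [pairing, (hα₁per y z).2, (hα₂per y z).2, (hWbper y z).2]
    ring
  · rw [fderiv_const_mul ((hα₁.pairing hα₂ hVb).differentiable (by simp) q),
      fderiv_const_mul ((hα₁.pairing hα₂ hWb).differentiable (by simp) q)]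
    simp only [smul_apply, smul_eq_mul]
    rw [← mul_sub, hd q, hcurl q, neg_mul, neg_neg, inv_mul_cancel₀ (hdet q), mul_one]

theorem IsLiftPotential.add_pairing {A B : ℝ × ℝ → ℝ}
    (hVb : ContDiff ℝ ∞ Vb) (hWb : ContDiff ℝ ∞ Wb)
    (hVbper : IsZ2Periodic Vb) (hWbper : IsZ2Periodic Wb) (hcomm : lie2 Vb Wb = fun _ => 0)
    (h : IsLiftPotential n Vb Wb A B) {β₁ β₂ : ℝ × ℝ → ℝ} (hβ : IsClosedPeriodicForm β₁ β₂) :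
    IsLiftPotential n Vb Wb (A + pairing β₁ β₂ Vb) (B + pairing β₁ β₂ Wb) := by
  have hPV := hβ.contDiff₁.pairing hβ.contDiff₂ hVb
  have hPW := hβ.contDiff₁.pairing hβ.contDiff₂ hWb
  have hPVper := hβ.periodic₁.pairing hβ.periodic₂ hVbper
  have hPWper := hβ.periodic₁.pairing hβ.periodic₂ hWbper
  refine ⟨h.contDiff₁.add hPV, h.contDiff₂.add hPW, fun y z => ⟨?_, ?_⟩, fun y z => ⟨?_, ?_⟩,
    fun q => ?_⟩
  · simp only [Pi.add_apply, (h.twisted₁ y z).1, (hPVper y z).1]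
  · simp only [Pi.add_apply, (h.twisted₁ y z).2, (hPVper y z).2]
    ring
  · simp only [Pi.add_apply, (h.twisted₂ y z).1, (hPWper y z).1]
  · simp only [Pi.add_apply, (h.twisted₂ y z).2, (hPWper y z).2]
    ring
  · have hd := fderiv_pairing_sub_of_lie2_eq_zero (hβ.contDiff₁.differentiable (by simp))
      (hβ.contDiff₂.differentiable (by simp)) (hVb.differentiable (by simp))
      (hWb.differentiable (by simp)) hcomm q
    rw [curl2, hβ.closed q, sub_self, zero_mul, neg_zero] at hd
    rw [fderiv_add (h.contDiff₁.differentiable (by simp) q) (hPV.differentiable (by simp) q),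
      fderiv_add (h.contDiff₂.differentiable (by simp) q) (hPW.differentiable (by simp) q)]
    simp only [add_apply]
    linear_combination h.bracket q + hd

theorem IsLiftPotential.exists_eq_add_pairing {A B : ℝ × ℝ → ℝ}
    (hVb : ContDiff ℝ ∞ Vb) (hWb : ContDiff ℝ ∞ Wb)
    (hVbper : IsZ2Periodic Vb) (hWbper : IsZ2Periodic Wb) (hcomm : lie2 Vb Wb = fun _ => 0)
    (hdet : ∀ q, det2 (Vb q) (Wb q) ≠ 0) (h : IsLiftPotential n Vb Wb A B) {A' B' : ℝ × ℝ → ℝ}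
    (h' : IsLiftPotential n Vb Wb A' B') :
    ∃ β₁ β₂, IsClosedPeriodicForm β₁ β₂ ∧
      A' = A + pairing β₁ β₂ Vb ∧ B' = B + pairing β₁ β₂ Wb := by
  set f := A' - A
  set g := B' - B
  have hf : ContDiff ℝ ∞ f := h'.contDiff₁.sub h.contDiff₁
  have hg : ContDiff ℝ ∞ g := h'.contDiff₂.sub h.contDiff₂
  have hfper : IsZ2Periodic f := fun y z => ⟨by simp [f, (h.twisted₁ y z).1, (h'.twisted₁ y z).1],
    by simp [f, (h.twisted₁ y z).2, (h'.twisted₁ y z).2]⟩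
  have hgper : IsZ2Periodic g := fun y z => ⟨by simp [g, (h.twisted₂ y z).1, (h'.twisted₂ y z).1],
    by simp [g, (h.twisted₂ y z).2, (h'.twisted₂ y z).2]⟩
  have hD : ContDiff ℝ ∞ fun q => det2 (Vb q) (Wb q) :=
    ((contDiff_fst.comp hVb).mul (contDiff_snd.comp hWb)).sub
      ((contDiff_snd.comp hVb).mul (contDiff_fst.comp hWb))
  -- Cramer's rule: `β` is the 1-form taking the values `f`, `g` on the frame `(Vb, Wb)`.
  set β₁ := fun q => (f q * (Wb q).2 - g q * (Vb q).2) / det2 (Vb q) (Wb q)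
  set β₂ := fun q => (g q * (Vb q).1 - f q * (Wb q).1) / det2 (Vb q) (Wb q)
  have hβ₁ : ContDiff ℝ ∞ β₁ :=
    ((hf.mul (contDiff_snd.comp hWb)).sub (hg.mul (contDiff_snd.comp hVb))).div hD hdet
  have hβ₂ : ContDiff ℝ ∞ β₂ :=
    ((hg.mul (contDiff_fst.comp hVb)).sub (hf.mul (contDiff_fst.comp hWb))).div hD hdet
  have hpV : pairing β₁ β₂ Vb = f := funext fun q => by
    simp only [pairing, β₁, β₂]
    rw [div_mul_eq_mul_div, div_mul_eq_mul_div, ← add_div, div_eq_iff (hdet q), det2]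
    ring
  have hpW : pairing β₁ β₂ Wb = g := funext fun q => by
    simp only [pairing, β₁, β₂]
    rw [div_mul_eq_mul_div, div_mul_eq_mul_div, ← add_div, div_eq_iff (hdet q), det2]
    ring
  refine ⟨β₁, β₂, ⟨hβ₁, hβ₂, fun y z => ⟨?_, ?_⟩, fun y z => ⟨?_, ?_⟩, fun q => ?_⟩,
    by rw [hpV, add_sub_cancel], by rw [hpW, add_sub_cancel]⟩
  · simp only [β₁, (hfper y z).1, (hgper y z).1, (hVbper y z).1, (hWbper y z).1]
  · simp only [β₁, (hfper y z).2, (hgper y z).2, (hVbper y z).2, (hWbper y z).2]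
  · simp only [β₂, (hfper y z).1, (hgper y z).1, (hVbper y z).1, (hWbper y z).1]
  · simp only [β₂, (hfper y z).2, (hgper y z).2, (hVbper y z).2, (hWbper y z).2]
  · have hd := fderiv_pairing_sub_of_lie2_eq_zero (hβ₁.differentiable (by simp))
      (hβ₂.differentiable (by simp)) (hVb.differentiable (by simp))
      (hWb.differentiable (by simp)) hcomm q
    rw [hpV, hpW, fderiv_sub (h'.contDiff₁.differentiable (by simp) q)
        (h.contDiff₁.differentiable (by simp) q),
      fderiv_sub (h'.contDiff₂.differentiable (by simp) q)
        (h.contDiff₂.differentiable (by simp) q)] at hd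
    simp only [sub_apply] at hd
    have hcurl : curl2 β₁ β₂ q * det2 (Vb q) (Wb q) = 0 := by
      linear_combination hd - h'.bracket q + h.bracket q
    exact sub_eq_zero.1 ((mul_eq_zero.1 hcurl).resolve_right (hdet q))

end LiftPotential

theorem stmt_7_general (n : ℕ) (c₁ c₂ : ℝ)
    (Vb Wb : ℝ × ℝ → ℝ × ℝ)
    (hVbs : ContDiff ℝ (⊤ : ℕ∞) Vb) (hWbs : ContDiff ℝ (⊤ : ℕ∞) Wb)
    (hVbper : ∀ y z : ℝ, Vb (y + 1, z) = Vb (y, z) ∧ Vb (y, z + 1) = Vb (y, z))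
    (hWbper : ∀ y z : ℝ, Wb (y + 1, z) = Wb (y, z) ∧ Wb (y, z + 1) = Wb (y, z))
    (hcomm : lie2 Vb Wb = fun _ => 0)
    (hdet : ∀ p : ℝ × ℝ, 0 < (Vb p).1 * (Wb p).2 - (Vb p).2 * (Wb p).1)
    (hvol : (∫ y in (0:ℝ)..1, ∫ z in (0:ℝ)..1,
        ((Vb (y, z)).1 * (Wb (y, z)).2 - (Vb (y, z)).2 * (Wb (y, z)).1)⁻¹) = 1) :
    ∃ V W : ℝ × ℝ × ℝ → ℝ × ℝ × ℝ, LiftConds n c₁ c₂ Vb Wb V W ∧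
      ∀ V' W' : ℝ × ℝ × ℝ → ℝ × ℝ × ℝ,
        LiftConds n c₁ c₂ Vb Wb V' W' ↔
          ∃ β₁ β₂ : ℝ × ℝ → ℝ,
            ContDiff ℝ (⊤ : ℕ∞) β₁ ∧ ContDiff ℝ (⊤ : ℕ∞) β₂ ∧
            (∀ y z : ℝ, β₁ (y + 1, z) = β₁ (y, z) ∧ β₁ (y, z + 1) = β₁ (y, z)) ∧
            (∀ y z : ℝ, β₂ (y + 1, z) = β₂ (y, z) ∧ β₂ (y, z + 1) = β₂ (y, z)) ∧
            (∀ p : ℝ × ℝ, fderiv ℝ β₂ p (1, 0) = fderiv ℝ β₁ p (0, 1)) ∧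
            (∀ p : ℝ × ℝ × ℝ, V' p
              = V p + (β₁ p.2 * (Vb p.2).1 + β₂ p.2 * (Vb p.2).2) • ((1:ℝ), (0:ℝ), (0:ℝ))) ∧
            (∀ p : ℝ × ℝ × ℝ, W' p
              = W p + (β₁ p.2 * (Wb p.2).1 + β₂ p.2 * (Wb p.2).2) • ((1:ℝ), (0:ℝ), (0:ℝ))) := by
  have hdet' : ∀ q, det2 (Vb q) (Wb q) ≠ 0 := fun q => (hdet q).ne'
  obtain ⟨A, B, hAB⟩ := exists_isLiftPotential n hVbs hWbs hVbper hWbper hcomm hdet' hvol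
  refine ⟨liftField A Vb, liftField B Wb,
    (liftConds_iff hVbs hWbs hVbper hWbper hcomm).2 ⟨A, B, hAB, rfl, rfl⟩, fun V' W' => ?_⟩
  rw [liftConds_iff hVbs hWbs hVbper hWbper hcomm]
  constructor
  · rintro ⟨A', B', hAB', rfl, rfl⟩
    obtain ⟨β₁, β₂, hβ, rfl, rfl⟩ :=
      hAB.exists_eq_add_pairing hVbs hWbs hVbper hWbper hcomm hdet' hAB'
    exact ⟨β₁, β₂, hβ.contDiff₁, hβ.contDiff₂, hβ.periodic₁, hβ.periodic₂, hβ.closed,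
      liftField_add _, liftField_add _⟩
  · rintro ⟨β₁, β₂, hβ₁, hβ₂, hβ₁per, hβ₂per, hclosed, hV', hW'⟩
    exact ⟨_, _, hAB.add_pairing hVbs hWbs hVbper hWbper hcomm ⟨hβ₁, hβ₂, hβ₁per, hβ₂per, hclosed⟩,
      funext fun p => (hV' p).trans (liftField_add (pairing β₁ β₂ Vb) p).symm,
      funext fun p => (hW' p).trans (liftField_add (pairing β₁ β₂ Wb) p).symm⟩

/-- Lemma `relevons`: a commuting frame `(V̄,W̄)` on the 2-torus of total dual volume 1
lifts to `Γ_{n,c₁,c₂}`-invariant fields `(V,W)` on `ℝ³` commuting with `∂x` and with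
`[V,W] = n∂x`; and `(V',W')` satisfies the same conditions iff it differs from `(V,W)`
by a closed ℤ²-periodic 1-form `β` via `V' = V + β(V̄)∂x`, `W' = W + β(W̄)∂x`. -/
theorem stmt_7 (n : ℕ) (c₁ c₂ : ℝ)
    (hc₁ : c₁ ∈ Set.Ico (0 : ℝ) 1) (hc₂ : c₂ ∈ Set.Ico (0 : ℝ) 1)
    (Vb Wb : ℝ × ℝ → ℝ × ℝ)
    (hVbs : ContDiff ℝ (⊤ : ℕ∞) Vb) (hWbs : ContDiff ℝ (⊤ : ℕ∞) Wb)
    (hVbper : ∀ y z : ℝ, Vb (y + 1, z) = Vb (y, z) ∧ Vb (y, z + 1) = Vb (y, z))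
    (hWbper : ∀ y z : ℝ, Wb (y + 1, z) = Wb (y, z) ∧ Wb (y, z + 1) = Wb (y, z))
    (hindep : ∀ p : ℝ × ℝ, LinearIndependent ℝ ![Vb p, Wb p])
    (hcomm : lie2 Vb Wb = fun _ => 0)
    (hdet : ∀ p : ℝ × ℝ, 0 < (Vb p).1 * (Wb p).2 - (Vb p).2 * (Wb p).1)
    (hvol : (∫ y in (0:ℝ)..1, ∫ z in (0:ℝ)..1,
        ((Vb (y, z)).1 * (Wb (y, z)).2 - (Vb (y, z)).2 * (Wb (y, z)).1)⁻¹) = 1) :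
    ∃ V W : ℝ × ℝ × ℝ → ℝ × ℝ × ℝ, LiftConds n c₁ c₂ Vb Wb V W ∧
      ∀ V' W' : ℝ × ℝ × ℝ → ℝ × ℝ × ℝ,
        LiftConds n c₁ c₂ Vb Wb V' W' ↔
          ∃ β₁ β₂ : ℝ × ℝ → ℝ,
            ContDiff ℝ (⊤ : ℕ∞) β₁ ∧ ContDiff ℝ (⊤ : ℕ∞) β₂ ∧
            (∀ y z : ℝ, β₁ (y + 1, z) = β₁ (y, z) ∧ β₁ (y, z + 1) = β₁ (y, z)) ∧
            (∀ y z : ℝ, β₂ (y + 1, z) = β₂ (y, z) ∧ β₂ (y, z + 1) = β₂ (y, z)) ∧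
            (∀ p : ℝ × ℝ, fderiv ℝ β₂ p (1, 0) = fderiv ℝ β₁ p (0, 1)) ∧
            (∀ p : ℝ × ℝ × ℝ, V' p
              = V p + (β₁ p.2 * (Vb p.2).1 + β₂ p.2 * (Vb p.2).2) • ((1:ℝ), (0:ℝ), (0:ℝ))) ∧
            (∀ p : ℝ × ℝ × ℝ, W' p
              = W p + (β₁ p.2 * (Wb p.2).1 + β₂ p.2 * (Wb p.2).2) • ((1:ℝ), (0:ℝ), (0:ℝ))) :=
  stmt_7_general n c₁ c₂ Vb Wb hVbs hWbs hVbper hWbper hcomm hdet hvol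
end
end

section
/- Let n ∈ ℕ and c₁, c₂ ∈ [0,1). (i) For a smooth function f : ℝ² → ℝ, the diffeomorphism F_f of ℝ³ defined by F_f(x,y,z) = (x + f(y,z), y, z) normalizes the group Γ_{n,c₁,c₂} if and only if f(y+p, z+q) − f(y,z) ∈ ℤ for every (p,q) ∈ ℤ² and every (y,z) ∈ ℝ². (ii) The diffeomorphism F of ℝ³ defined by F(x,y,z) = (x − c₁y − c₂z, y, z) satisfies F·Γ_{n,c₁,c₂}·F⁻¹ = Γ_{n,0,0}. -/
/-!
Every element of `Γ_{n,c₁,c₂}` has the normal form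
`(x,y,z) ↦ (x + qny + qc₂ + pc₁ + m, y + p, z + q)` with `(m,p,q) ∈ ℤ³`. Conjugating it by a shear
`(x,y,z) ↦ (x + f(y,z), y, z)` only adds `f(y+p, z+q) − f(y,z)` to the first coordinate. So the
conjugate lies in `Γ_{n,c₁,c₂}` exactly when this difference is a constant integer; for continuous
`f` an integer-valued difference is constant because `ℝ²` is connected. For `f(y,z) = −c₁y − c₂z`
the difference is `−pc₁ − qc₂`, which cancels the constants `c₁, c₂` of the normal form.
-/

noncomputable section

open Function

@[simp]
lemma affMap_apply (φ : ℝ × ℝ → ℝ) (ψ : ℝ → ℝ) (b : ℝ) (p : ℝ × ℝ × ℝ) :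
    affMap φ ψ b p = (p.1 + φ p.2, p.2.1 + ψ p.2.2, p.2.2 + b) := rfl

lemma affMap_inj {φ φ' : ℝ × ℝ → ℝ} {ψ ψ' : ℝ → ℝ} {b b' : ℝ} :
    affMap φ ψ b = affMap φ' ψ' b' ↔ φ = φ' ∧ ψ = ψ' ∧ b = b' := by
  refine ⟨fun h => ⟨funext fun w => ?_, funext fun z => ?_, ?_⟩,
    fun ⟨h₁, h₂, h₃⟩ => h₁ ▸ h₂ ▸ h₃ ▸ rfl⟩
  · simpa using congrArg (fun e : Equiv.Perm (ℝ × ℝ × ℝ) => (e (0, w)).1) h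
  · simpa using congrArg (fun e : Equiv.Perm (ℝ × ℝ × ℝ) => (e (0, 0, z)).2.1) h
  · simpa using congrArg (fun e : Equiv.Perm (ℝ × ℝ × ℝ) => (e (0, 0, 0)).2.2) h

lemma conj_affMap (f φ : ℝ × ℝ → ℝ) (ψ : ℝ → ℝ) (b : ℝ) :
    MulAut.conj (affMap f (fun _ => 0) 0) (affMap φ ψ b) =
      affMap (fun w => φ w + (f (w.1 + ψ w.2, w.2 + b) - f w)) ψ b := by
  rw [MulAut.conj_apply, mul_inv_eq_iff_eq_mul]
  ext ⟨x, y, z⟩ <;> simp only [Equiv.Perm.mul_apply, affMap_apply, add_zero]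
  ring

lemma eq_zpow_of_map_add {G : Type*} [Group G] {e : ℤ → G} (he : ∀ j k, e (j + k) = e j * e k)
    (k : ℤ) : e k = e 1 ^ k := by
  simpa [← ofAdd_zsmul] using
    (MonoidHom.mk' (fun a : Multiplicative ℤ => e a.toAdd) fun a b => he a.toAdd b.toAdd).map_zpow
      (.ofAdd 1) k

section NormalForm

variable (n : ℕ) (c₁ c₂ : ℝ)

def gammaElt : ℤ × ℤ × ℤ → Equiv.Perm (ℝ × ℝ × ℝ)
  | (m, p, q) => affMap (fun w => q * n * w.1 + q * c₂ + p * c₁ + m) (fun _ => p) q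

lemma gammaElt_mul (m₁ p₁ q₁ m₂ p₂ q₂ : ℤ) :
    gammaElt n c₁ c₂ (m₁, p₁, q₁) * gammaElt n c₁ c₂ (m₂, p₂, q₂) =
      gammaElt n c₁ c₂ (m₁ + m₂ + q₁ * n * p₂, p₁ + p₂, q₁ + q₂) := by
  ext ⟨x, y, z⟩ <;> simp only [gammaElt, Equiv.Perm.mul_apply, affMap_apply, Int.cast_add,
    Int.cast_mul, Int.cast_natCast] <;> ring

lemma gammaElt_zero : gammaElt n c₁ c₂ (0, 0, 0) = 1 := by
  ext ⟨x, y, z⟩ <;> simp [gammaElt]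

lemma gammaElt_inv (m p q : ℤ) :
    (gammaElt n c₁ c₂ (m, p, q))⁻¹ = gammaElt n c₁ c₂ (-m + q * n * p, -p, -q) := by
  rw [inv_eq_iff_mul_eq_one, gammaElt_mul, ← gammaElt_zero n c₁ c₂]
  simp

lemma gammaElt_eq_zpow_mul_zpow_mul_zpow (m p q : ℤ) :
    gammaElt n c₁ c₂ (m, p, q) =
      gammaElt n c₁ c₂ (1, 0, 0) ^ m * gammaElt n c₁ c₂ (0, 1, 0) ^ p *
        gammaElt n c₁ c₂ (0, 0, 1) ^ q := by
  rw [← eq_zpow_of_map_add (e := fun k => gammaElt n c₁ c₂ (k, 0, 0)),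
    ← eq_zpow_of_map_add (e := fun k => gammaElt n c₁ c₂ (0, k, 0)),
    ← eq_zpow_of_map_add (e := fun k => gammaElt n c₁ c₂ (0, 0, k)), gammaElt_mul, gammaElt_mul]
  all_goals simp [gammaElt_mul]

lemma Gamma_eq_closure_gammaElt :
    Gamma n c₁ c₂ = Subgroup.closure
      {gammaElt n c₁ c₂ (1, 0, 0), gammaElt n c₁ c₂ (0, 1, 0), gammaElt n c₁ c₂ (0, 0, 1)} := by
  simp [Gamma, gammaElt]

lemma gammaElt_mem_Gamma (t : ℤ × ℤ × ℤ) : gammaElt n c₁ c₂ t ∈ Gamma n c₁ c₂ := by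
  have mem_gen (t) (ht : t ∈ ({(1, 0, 0), (0, 1, 0), (0, 0, 1)} : Set (ℤ × ℤ × ℤ))) :
      gammaElt n c₁ c₂ t ∈ Gamma n c₁ c₂ := by
    rw [Gamma_eq_closure_gammaElt]
    exact Subgroup.subset_closure (by rcases ht with rfl | rfl | rfl <;> simp)
  obtain ⟨m, p, q⟩ := t
  rw [gammaElt_eq_zpow_mul_zpow_mul_zpow]
  exact mul_mem (mul_mem (zpow_mem (mem_gen _ (by simp)) m) (zpow_mem (mem_gen _ (by simp)) p))
    (zpow_mem (mem_gen _ (by simp)) q)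

lemma coe_Gamma :
    (Gamma n c₁ c₂ : Set (Equiv.Perm (ℝ × ℝ × ℝ))) = Set.range (gammaElt n c₁ c₂) := by
  refine subset_antisymm (fun g hg => ?_) (Set.range_subset_iff.mpr (gammaElt_mem_Gamma n c₁ c₂))
  rw [SetLike.mem_coe, Gamma_eq_closure_gammaElt] at hg
  induction hg using Subgroup.closure_induction with
  | mem g hg => rcases hg with rfl | rfl | rfl <;> exact Set.mem_range_self _
  | one => exact ⟨(0, 0, 0), gammaElt_zero n c₁ c₂⟩
  | mul _ _ _ _ h₁ h₂ =>
    obtain ⟨⟨m₁, p₁, q₁⟩, rfl⟩ := h₁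
    obtain ⟨⟨m₂, p₂, q₂⟩, rfl⟩ := h₂
    exact ⟨_, (gammaElt_mul n c₁ c₂ m₁ p₁ q₁ m₂ p₂ q₂).symm⟩
  | inv _ _ h =>
    obtain ⟨⟨m, p, q⟩, rfl⟩ := h
    exact ⟨_, (gammaElt_inv n c₁ c₂ m p q).symm⟩

lemma mem_Gamma_iff {g : Equiv.Perm (ℝ × ℝ × ℝ)} :
    g ∈ Gamma n c₁ c₂ ↔ ∃ t, gammaElt n c₁ c₂ t = g := by
  rw [← SetLike.mem_coe, coe_Gamma, Set.mem_range]

end NormalForm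

lemma conj_gammaElt_eq_gammaElt_iff (f : ℝ × ℝ → ℝ) {n : ℕ} {c₁ c₂ c₁' c₂' : ℝ}
    {m p q m' p' q' : ℤ} :
    MulAut.conj (affMap f (fun _ => 0) 0) (gammaElt n c₁ c₂ (m, p, q)) =
        gammaElt n c₁' c₂' (m', p', q') ↔
      p = p' ∧ q = q' ∧
        ∀ y z, f (y + p, z + q) - f (y, z) = m' - m + p * (c₁' - c₁) + q * (c₂' - c₂) := by
  rw [gammaElt, conj_affMap, gammaElt, affMap_inj]
  constructor
  · rintro ⟨hφ, hψ, hq⟩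
    obtain rfl : p = p' := by exact_mod_cast congrFun hψ 0
    obtain rfl : q = q' := by exact_mod_cast hq
    refine ⟨rfl, rfl, fun y z => ?_⟩
    linarith [congrFun hφ (y, z)]
  · rintro ⟨rfl, rfl, hΔ⟩
    refine ⟨funext fun ⟨y, z⟩ => ?_, rfl, rfl⟩
    linarith [hΔ y z]

lemma map_conj_Gamma_of_surjective (g : Equiv.Perm (ℝ × ℝ × ℝ)) {n : ℕ} {c₁ c₂ c₁' c₂' : ℝ}
    (σ : ℤ × ℤ × ℤ → ℤ × ℤ × ℤ) (hσ : Surjective σ)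
    (h : ∀ t, MulAut.conj g (gammaElt n c₁ c₂ t) = gammaElt n c₁' c₂' (σ t)) :
    (Gamma n c₁ c₂).map (MulAut.conj g).toMonoidHom = Gamma n c₁' c₂' := by
  apply SetLike.coe_injective
  rw [Subgroup.coe_map, coe_Gamma, coe_Gamma, ← Set.range_comp,
    ← hσ.range_comp (gammaElt n c₁' c₂')]
  exact congrArg Set.range (funext h)

lemma exists_int_forall_eq_of_continuous {X : Type*} [TopologicalSpace X] [ConnectedSpace X]
    {δ : X → ℝ} (hδ : Continuous δ) (hint : ∀ x, ∃ m : ℤ, δ x = m) : ∃ m : ℤ, ∀ x, δ x = m := by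
  choose k hk using hint
  have hk_cont : Continuous k :=
    Int.isClosedEmbedding_coe_real.continuous_iff.mpr (by simpa [comp_def, ← hk] using hδ)
  obtain ⟨x₀⟩ := ‹ConnectedSpace X›.toNonempty
  exact ⟨k x₀, fun x =>
    (hk x).trans (congrArg _ (PreconnectedSpace.constant inferInstance hk_cont))⟩

theorem stmt_8_general (n : ℕ) (c₁ c₂ : ℝ) :
    (∀ f : ℝ × ℝ → ℝ, ContDiff ℝ (⊤ : ℕ∞) f →
      (affMap f (fun _ => 0) 0 ∈ Subgroup.normalizer (Gamma n c₁ c₂ : Set (Equiv.Perm (ℝ × ℝ × ℝ))) ↔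
        ∀ (p q : ℤ) (y z : ℝ), ∃ m : ℤ, f (y + p, z + q) - f (y, z) = m)) ∧
    Subgroup.map
      (MulAut.conj (affMap (fun w => -(c₁ * w.1) - c₂ * w.2) (fun _ => 0) 0)).toMonoidHom
      (Gamma n c₁ c₂) = Gamma n 0 0 := by
  refine ⟨fun f hf => ⟨fun hnorm p q y z => ?_, fun hint => ?_⟩, ?_⟩
  · obtain ⟨⟨m, p', q'⟩, he⟩ := (mem_Gamma_iff n c₁ c₂).mp
      ((Subgroup.mem_normalizer_iff.mp hnorm _).mp (gammaElt_mem_Gamma n c₁ c₂ (0, p, q)))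
    obtain ⟨-, -, hΔ⟩ := (conj_gammaElt_eq_gammaElt_iff f).mp he.symm
    exact ⟨m, by simpa using hΔ y z⟩
  · have hconst (p q : ℤ) : ∃ k : ℤ, ∀ w : ℝ × ℝ, f (w.1 + p, w.2 + q) - f w = k :=
      exists_int_forall_eq_of_continuous (by fun_prop) fun w => hint p q w.1 w.2
    choose k hk using hconst
    rw [Subgroup.mem_normalizer_iff_map_conj_eq]
    refine map_conj_Gamma_of_surjective _ (fun t => (t.1 + k t.2.1 t.2.2, t.2))
      (fun ⟨m, p, q⟩ => ⟨(m - k p q, p, q), by simp⟩) fun ⟨m, p, q⟩ => ?_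
    exact (conj_gammaElt_eq_gammaElt_iff f).mpr ⟨rfl, rfl, fun y z => by simpa using hk p q (y, z)⟩
  · exact map_conj_Gamma_of_surjective _ id surjective_id fun ⟨m, p, q⟩ =>
      (conj_gammaElt_eq_gammaElt_iff _).mpr ⟨rfl, rfl, fun y z => by push_cast; ring⟩

/-- (i) For smooth `f`, the map `F_f : (x,y,z) ↦ (x+f(y,z),y,z)` normalizes `Γ_{n,c₁,c₂}`
iff `f(y+p,z+q) − f(y,z) ∈ ℤ` for all `(p,q) ∈ ℤ²`.
(ii) `F : (x,y,z) ↦ (x−c₁y−c₂z,y,z)` conjugates `Γ_{n,c₁,c₂}` onto `Γ_{n,0,0}`. -/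
theorem stmt_8 (n : ℕ) (c₁ c₂ : ℝ)
    (hc₁ : c₁ ∈ Set.Ico (0 : ℝ) 1) (hc₂ : c₂ ∈ Set.Ico (0 : ℝ) 1) :
    (∀ f : ℝ × ℝ → ℝ, ContDiff ℝ (⊤ : ℕ∞) f →
      (affMap f (fun _ => 0) 0 ∈ Subgroup.normalizer (Gamma n c₁ c₂ : Set (Equiv.Perm (ℝ × ℝ × ℝ))) ↔
        ∀ (p q : ℤ) (y z : ℝ), ∃ m : ℤ, f (y + p, z + q) - f (y, z) = m)) ∧
    Subgroup.map
      (MulAut.conj (affMap (fun w => -(c₁ * w.1) - c₂ * w.2) (fun _ => 0) 0)).toMonoidHom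
      (Gamma n c₁ c₂) = Gamma n 0 0 :=
  stmt_8_general n c₁ c₂
end
end

section
/- Let n ∈ ℕ, c₁, c₂ ∈ [0,1), θ ∈ ℝ, Λ ∈ ℝ \ {0}, and let L, ν, μ : ℝ² → ℝ be smooth ℤ²-periodic functions with L > 0 everywhere. Set α = dx − nz·dy and γ = dz − θ·dy, and define the smooth field g̃ of symmetric bilinear forms on ℝ³ by g̃ = Λ(α⊗γ + γ⊗α) + L(y,z)²·dy⊗dy + ν(y,z)(dy⊗γ + γ⊗dy) + μ(y,z)·γ⊗γ (equivalently, the Gram matrix of g̃ in the frame (∂x, ∂y + nz∂x + θ∂z, ∂z) is [[0,0,Λ],[0,L²,ν],[Λ,ν,μ]]). Then: (i) at every point of ℝ³, g̃ is nondegenerate of Lorentzian signature (2,1); (ii) g̃ is invariant under Γ_{n,c₁,c₂}, i.e. φ*g̃ = g̃ for every φ ∈ Γ_{n,c₁,c₂}; (iii) g̃(∂x, ∂x) = 0 and the 1-form g̃(∂x, ·) equals Λ(dz − θdy), which is closed; (iv) g̃ is invariant under every translation (x,y,z) ↦ (x+s, y, z). -/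
noncomputable section

/-- The field of symmetric bilinear forms
`g̃ = Λ(α⊗γ + γ⊗α) + L²·dy⊗dy + ν(dy⊗γ + γ⊗dy) + μ·γ⊗γ`, where
`α = dx − nz·dy` and `γ = dz − θ·dy`. -/
def gNine (n : ℕ) (θ Λ : ℝ) (L ν μ : ℝ × ℝ → ℝ) (p u v : ℝ × ℝ × ℝ) : ℝ :=
  Λ * ((u.1 - n * p.2.2 * u.2.1) * (v.2.2 - θ * v.2.1)
      + (u.2.2 - θ * u.2.1) * (v.1 - n * p.2.2 * v.2.1))
    + (L p.2) ^ 2 * u.2.1 * v.2.1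
    + ν p.2 * (u.2.1 * (v.2.2 - θ * v.2.1) + (u.2.2 - θ * u.2.1) * v.2.1)
    + μ p.2 * ((u.2.2 - θ * u.2.1) * (v.2.2 - θ * v.2.1))

/-!
In the frame `X = ∂x`, `Y = ∂y + nz ∂x + θ ∂z`, `Z = ∂z` the Gram matrix of `g̃` is
`[[0,0,Λ],[0,L²,ν],[Λ,ν,μ]]`. Hence `Y / L` is a unit vector orthogonal to the hyperbolic plane
spanned by `X` and the null vector `W = (Z - (ν/L²) Y + t X) / (2Λ)`, `t = (ν²/L² - μ)/(2Λ)`,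
with `g̃(X, W) = 1/2`; so `X + W`, `Y / L`, `X - W` is an orthonormal basis of signature `(2,1)`.

The generators of `Γ_{n,c₁,c₂}` and their inverses are affine maps
`(x, y, z) ↦ (x + ay + b, y + e, z + f)` with `a = nf` and `(e, f) ∈ ℤ²`. Their differential
`u ↦ (u₁ + a u₂, u₂, u₃)` changes `α = dx - nz dy` by `a dy`, which is exactly compensated by the
shift of `nz` by `nf`, while `L, ν, μ` are unchanged by periodicity. Maps preserving `g̃` form
a group, which therefore contains `Γ_{n,c₁,c₂}`.
-/

section BilinForm

variable {R M : Type*} [CommRing R] [AddCommGroup M] [Module R M]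

theorem gram_hyperbolic_add_sub {B : LinearMap.BilinForm R M} (hB : B.IsSymm) {x y w : M}
    (hxx : B x x = 0) (hww : B w w = 0) (hxw : 2 * B x w = 1) (hxy : B x y = 0)
    (hwy : B w y = 0) (hyy : B y y = 1) (i j : Fin 3) :
    B (![x + w, y, x - w] i) (![x + w, y, x - w] j)
      = if i = j then (if (i : ℕ) < 2 then 1 else -1) else 0 := by
  have hwx := hB.eq w x
  have hyx := hB.eq y x
  have hyw := hB.eq y w
  fin_cases i <;> fin_cases j <;>
    simp only [Fin.zero_eta, Fin.mk_one, Fin.reduceFinMk, Fin.isValue, Matrix.cons_val_zero,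
      Matrix.cons_val_one, Matrix.cons_val, map_add, map_sub, LinearMap.add_apply,
      LinearMap.sub_apply, hxx, hww, hxy, hwy, hyy, hwx, hyx, hyw, Fin.reduceEq, ↓reduceIte,
      Nat.reduceLT] <;>
    first | linear_combination hxw | linear_combination -hxw | ring

theorem exists_basis_of_gram_eq_diagonal {K V ι : Type*} [Field K] [AddCommGroup V] [Module K V]
    [Fintype ι] [Nonempty ι] [DecidableEq ι] {B : LinearMap.BilinForm K V} {v : ι → V} {ε : ι → K}
    (hv : ∀ i j, B (v i) (v j) = if i = j then ε i else 0) (hε : ∀ i, ε i ≠ 0)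
    (hcard : Fintype.card ι = Module.finrank K V) : ∃ e : Module.Basis ι K V, ⇑e = v := by
  have hli := LinearMap.BilinForm.linearIndependent_of_iIsOrtho (B := B) (v := v)
    (fun i j hij => (hv i j).trans (if_neg hij)) (fun i => by rw [hv, if_pos rfl]; exact hε i)
  exact ⟨basisOfLinearIndependentOfCardEqFinrank hli hcard,
    coe_basisOfLinearIndependentOfCardEqFinrank hli hcard⟩

theorem separatingLeft_of_gram_eq_diagonal {R M ι : Type*} [CommRing R] [IsDomain R]
    [AddCommGroup M] [Module R M] [Module.IsTorsionFree R M] [DecidableEq ι]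
    {B : LinearMap.BilinForm R M} (e : Module.Basis ι R M) {ε : ι → R}
    (he : ∀ i j, B (e i) (e j) = if i = j then ε i else 0) (hε : ∀ i, ε i ≠ 0) :
    B.SeparatingLeft :=
  LinearMap.IsOrthoᵢ.separatingLeft_of_not_isOrtho_basis_self e
    (fun i j hij => (he i j).trans (if_neg hij)) (fun i => by rw [he, if_pos rfl]; exact hε i)

end BilinForm

section Pointwise

variable (n : ℕ) (θ Λ : ℝ) (L ν μ : ℝ × ℝ → ℝ) (p : ℝ × ℝ × ℝ)

def gNineAt : LinearMap.BilinForm ℝ (ℝ × ℝ × ℝ) :=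
  LinearMap.mk₂ ℝ (gNine n θ Λ L ν μ p)
    (fun u u' v => by simp only [gNine, Prod.fst_add, Prod.snd_add]; ring)
    (fun c u v => by simp only [gNine, Prod.smul_fst, Prod.smul_snd, smul_eq_mul]; ring)
    (fun u v v' => by simp only [gNine, Prod.fst_add, Prod.snd_add]; ring)
    (fun c u v => by simp only [gNine, Prod.smul_fst, Prod.smul_snd, smul_eq_mul]; ring)

@[simp]
lemma gNineAt_apply (u v : ℝ × ℝ × ℝ) : gNineAt n θ Λ L ν μ p u v = gNine n θ Λ L ν μ p u v :=
  rfl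

lemma gNineAt_isSymm : (gNineAt n θ Λ L ν μ p).IsSymm :=
  ⟨fun u v => by simp only [gNineAt_apply, gNine]; ring⟩

theorem gNineAt_exists_lorentz_basis (hΛ : Λ ≠ 0) (hL : L p.2 ≠ 0) :
    ∃ e : Module.Basis (Fin 3) ℝ (ℝ × ℝ × ℝ), ∀ i j : Fin 3,
      gNineAt n θ Λ L ν μ p (e i) (e j)
        = if i = j then (if (i : ℕ) < 2 then 1 else -1) else 0 := by
  -- `x = X`, `y = Y / L`, `w = W` of the header, in coordinates
  have hgram := gram_hyperbolic_add_sub (gNineAt_isSymm n θ Λ L ν μ p)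
    (x := (1, 0, 0)) (y := (n * p.2.2 / L p.2, 1 / L p.2, θ / L p.2))
    (w := (((ν p.2 ^ 2 / L p.2 ^ 2 - μ p.2) / (2 * Λ) - ν p.2 * n * p.2.2 / L p.2 ^ 2) / (2 * Λ),
      -ν p.2 / L p.2 ^ 2 / (2 * Λ), (1 - ν p.2 * θ / L p.2 ^ 2) / (2 * Λ)))
    ?_ ?_ ?_ ?_ ?_ ?_
  · obtain ⟨e, he⟩ := exists_basis_of_gram_eq_diagonal hgram (fun i => by fin_cases i <;> simp)
      (by simp)
    exact ⟨e, he ▸ hgram⟩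
  all_goals simp only [gNineAt_apply, gNine]; field_simp; ring

theorem gNineAt_separatingLeft (hΛ : Λ ≠ 0) (hL : L p.2 ≠ 0) :
    (gNineAt n θ Λ L ν μ p).SeparatingLeft := by
  obtain ⟨e, he⟩ := gNineAt_exists_lorentz_basis n θ Λ L ν μ p hΛ hL
  exact separatingLeft_of_gram_eq_diagonal e he (fun i => by split_ifs <;> norm_num)

lemma gNine_partialX_left (v : ℝ × ℝ × ℝ) :
    gNine n θ Λ L ν μ p (1, 0, 0) v = Λ * (v.2.2 - θ * v.2.1) := by
  simp only [gNine]; ring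

end Pointwise

section MetricPreserving

variable {E : Type*} [NormedAddCommGroup E] [NormedSpace ℝ E] (g : E → E → E → ℝ)

def PreservesMetric (F : E → E) : Prop :=
  Differentiable ℝ F ∧ ∀ p u v, g (F p) (fderiv ℝ F p u) (fderiv ℝ F p v) = g p u v

lemma preservesMetric_id : PreservesMetric g id :=
  ⟨differentiable_id, fun p u v => by rw [fderiv_id]; rfl⟩

variable {g} in
lemma PreservesMetric.comp {F G : E → E} (hF : PreservesMetric g F) (hG : PreservesMetric g G) :
    PreservesMetric g (F ∘ G) := by
  refine ⟨hF.1.comp hG.1, fun p u v => ?_⟩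
  rw [fderiv_comp p (hF.1 _) (hG.1 _), ContinuousLinearMap.comp_apply,
    ContinuousLinearMap.comp_apply, Function.comp_apply, hF.2, hG.2]

/-- Differentiability of `φ⁻¹` is not automatic, hence it is required separately. -/
def metricPreservingGroup : Subgroup (Equiv.Perm E) where
  carrier := {φ | PreservesMetric g φ ∧ PreservesMetric g ⇑φ⁻¹}
  mul_mem' {φ ψ} hφ hψ := ⟨hφ.1.comp hψ.1, by rw [mul_inv_rev]; exact hψ.2.comp hφ.2⟩
  one_mem' := ⟨preservesMetric_id g, preservesMetric_id g⟩
  inv_mem' {φ} hφ := ⟨hφ.2, by rw [inv_inv]; exact hφ.1⟩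

end MetricPreserving

def shearCLM (a : ℝ) : (ℝ × ℝ × ℝ) →L[ℝ] ℝ × ℝ × ℝ :=
  ((ContinuousLinearMap.fst ℝ ℝ (ℝ × ℝ)) +
    a • ((ContinuousLinearMap.fst ℝ ℝ ℝ).comp (ContinuousLinearMap.snd ℝ ℝ (ℝ × ℝ)))).prod
    (ContinuousLinearMap.snd ℝ ℝ (ℝ × ℝ))

lemma shearCLM_apply (a : ℝ) (u : ℝ × ℝ × ℝ) : shearCLM a u = (u.1 + a * u.2.1, u.2.1, u.2.2) :=
  rfl

lemma hasFDerivAt_of_eq_shear_add {a b e f : ℝ} {F : ℝ × ℝ × ℝ → ℝ × ℝ × ℝ}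
    (hF : ∀ p, F p = (p.1 + a * p.2.1 + b, p.2.1 + e, p.2.2 + f)) (p : ℝ × ℝ × ℝ) :
    HasFDerivAt F (shearCLM a) p := by
  have hF' : F = fun q => shearCLM a q + (b, e, f) := by
    funext q
    rw [hF, shearCLM_apply, Prod.mk_add_mk, Prod.mk_add_mk]
  exact hF' ▸ (shearCLM a).hasFDerivAt.add_const _

section Invariance

variable {n : ℕ} {θ Λ : ℝ} {L ν μ : ℝ × ℝ → ℝ}

lemma preservesMetric_gNine_of_eq_shear_add {a b e f : ℝ} (ha : a = n * f)
    (hL : Function.Periodic L (e, f)) (hν : Function.Periodic ν (e, f))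
    (hμ : Function.Periodic μ (e, f)) {F : ℝ × ℝ × ℝ → ℝ × ℝ × ℝ}
    (hF : ∀ p, F p = (p.1 + a * p.2.1 + b, p.2.1 + e, p.2.2 + f)) :
    PreservesMetric (gNine n θ Λ L ν μ) F := by
  refine ⟨fun p => (hasFDerivAt_of_eq_shear_add hF p).differentiableAt, fun p u v => ?_⟩
  have hFp : (F p).2 = p.2 + (e, f) := by rw [hF]; rfl
  rw [(hasFDerivAt_of_eq_shear_add hF p).fderiv]
  simp only [gNine, hFp, hL p.2, hν p.2, hμ p.2, shearCLM_apply, Prod.snd_add]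
  subst ha
  ring

lemma affMap_mem_metricPreservingGroup {φ : ℝ × ℝ → ℝ} {a c e f : ℝ}
    (hφ : ∀ q, φ q = a * q.1 + c) (ha : a = n * f) (hL : Function.Periodic L (e, f))
    (hν : Function.Periodic ν (e, f)) (hμ : Function.Periodic μ (e, f)) :
    affMap φ (fun _ => e) f ∈ metricPreservingGroup (gNine n θ Λ L ν μ) := by
  have hneg {F : ℝ × ℝ → ℝ} (hF : Function.Periodic F (e, f)) : Function.Periodic F (-e, -f) :=
    hF.neg
  refine ⟨preservesMetric_gNine_of_eq_shear_add (b := c) ha hL hν hμ fun p => ?_,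
    preservesMetric_gNine_of_eq_shear_add (a := -a) (b := a * e - c) (by rw [ha]; ring)
      (hneg hL) (hneg hν) (hneg hμ) fun p => ?_⟩
  · simp only [affMap, Equiv.coe_fn_mk, hφ, add_assoc]
  · simp only [affMap, Equiv.Perm.coe_inv, Equiv.coe_fn_symm_mk, hφ]
    ring_nf

theorem gamma_le_metricPreservingGroup {c₁ c₂ : ℝ}
    (hLper : ∀ y z : ℝ, L (y + 1, z) = L (y, z) ∧ L (y, z + 1) = L (y, z))
    (hνper : ∀ y z : ℝ, ν (y + 1, z) = ν (y, z) ∧ ν (y, z + 1) = ν (y, z))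
    (hμper : ∀ y z : ℝ, μ (y + 1, z) = μ (y, z) ∧ μ (y, z + 1) = μ (y, z)) :
    Gamma n c₁ c₂ ≤ metricPreservingGroup (gNine n θ Λ L ν μ) := by
  have hper {F : ℝ × ℝ → ℝ} (h : ∀ y z : ℝ, F (y + 1, z) = F (y, z) ∧ F (y, z + 1) = F (y, z)) :
      Function.Periodic F (1, 0) ∧ Function.Periodic F (0, 1) :=
    ⟨fun ⟨y, z⟩ => by simpa using (h y z).1, fun ⟨y, z⟩ => by simpa using (h y z).2⟩
  have hzero {F : ℝ × ℝ → ℝ} : Function.Periodic F (0, 0) := fun w => by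
    rw [Prod.mk_zero_zero, add_zero]
  rw [Gamma, Subgroup.closure_le]
  rintro φ (rfl | rfl | rfl)
  · exact affMap_mem_metricPreservingGroup (a := 0) (c := 1) (fun _ => by ring) (by simp)
      hzero hzero hzero
  · exact affMap_mem_metricPreservingGroup (a := 0) (c := c₁) (fun _ => by ring) (by simp)
      (hper hLper).1 (hper hνper).1 (hper hμper).1
  · exact affMap_mem_metricPreservingGroup (fun _ => rfl) (by ring)
      (hper hLper).2 (hper hνper).2 (hper hμper).2

end Invariance

theorem stmt_9_general (n : ℕ) (c₁ c₂ : ℝ)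
    (θ Λ : ℝ) (hΛ : Λ ≠ 0)
    (L ν μ : ℝ × ℝ → ℝ)
    (hLpos : ∀ w : ℝ × ℝ, 0 < L w)
    (hLper : ∀ y z : ℝ, L (y + 1, z) = L (y, z) ∧ L (y, z + 1) = L (y, z))
    (hνper : ∀ y z : ℝ, ν (y + 1, z) = ν (y, z) ∧ ν (y, z + 1) = ν (y, z))
    (hμper : ∀ y z : ℝ, μ (y + 1, z) = μ (y, z) ∧ μ (y, z + 1) = μ (y, z)) :
    (∀ p : ℝ × ℝ × ℝ,
      (∃ e : Module.Basis (Fin 3) ℝ (ℝ × ℝ × ℝ), ∀ i j : Fin 3,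
        gNine n θ Λ L ν μ p (e i) (e j)
          = if i = j then (if (i : ℕ) < 2 then 1 else -1) else 0) ∧
      (∀ u : ℝ × ℝ × ℝ, (∀ v : ℝ × ℝ × ℝ, gNine n θ Λ L ν μ p u v = 0) → u = 0)) ∧
    (∀ φ ∈ Gamma n c₁ c₂, ∀ p u v : ℝ × ℝ × ℝ,
      gNine n θ Λ L ν μ (φ p) (fderiv ℝ (⇑φ) p u) (fderiv ℝ (⇑φ) p v)
        = gNine n θ Λ L ν μ p u v) ∧
    (∀ p : ℝ × ℝ × ℝ, gNine n θ Λ L ν μ p (1, 0, 0) (1, 0, 0) = 0) ∧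
    (∀ p v : ℝ × ℝ × ℝ, gNine n θ Λ L ν μ p (1, 0, 0) v = Λ * (v.2.2 - θ * v.2.1)) ∧
    (∀ p u v : ℝ × ℝ × ℝ,
      fderiv ℝ (fun q => gNine n θ Λ L ν μ q (1, 0, 0) v) p u
        = fderiv ℝ (fun q => gNine n θ Λ L ν μ q (1, 0, 0) u) p v) ∧
    (∀ s : ℝ, ∀ p u v : ℝ × ℝ × ℝ,
      gNine n θ Λ L ν μ (p.1 + s, p.2) u v = gNine n θ Λ L ν μ p u v) := by
  refine ⟨fun p => ?_, fun φ hφ => (gamma_le_metricPreservingGroup hLper hνper hμper hφ).1.2,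
    fun p => by simp [gNine_partialX_left], gNine_partialX_left n θ Λ L ν μ, fun p u v => ?_,
    fun s p u v => rfl⟩
  · exact ⟨gNineAt_exists_lorentz_basis n θ Λ L ν μ p hΛ (hLpos p.2).ne',
      gNineAt_separatingLeft n θ Λ L ν μ p hΛ (hLpos p.2).ne'⟩
  · simp only [gNine_partialX_left, fderiv_fun_const, Pi.zero_apply, zero_apply]

/-- Basic properties of the metric `g̃` of Proposition `fibres`: at every point it is
nondegenerate of Lorentzian signature `(2,1)`; it is `Γ_{n,c₁,c₂}`-invariant; `∂x` is
lightlike and `g̃(∂x, ·) = Λ(dz − θ dy)`, a closed 1-form; and `g̃` is invariant under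
all translations in the `x`-direction. -/
theorem stmt_9 (n : ℕ) (c₁ c₂ : ℝ)
    (hc₁ : c₁ ∈ Set.Ico (0 : ℝ) 1) (hc₂ : c₂ ∈ Set.Ico (0 : ℝ) 1)
    (θ Λ : ℝ) (hΛ : Λ ≠ 0)
    (L ν μ : ℝ × ℝ → ℝ)
    (hLs : ContDiff ℝ (⊤ : ℕ∞) L) (hνs : ContDiff ℝ (⊤ : ℕ∞) ν)
    (hμs : ContDiff ℝ (⊤ : ℕ∞) μ)
    (hLpos : ∀ w : ℝ × ℝ, 0 < L w)
    (hLper : ∀ y z : ℝ, L (y + 1, z) = L (y, z) ∧ L (y, z + 1) = L (y, z))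
    (hνper : ∀ y z : ℝ, ν (y + 1, z) = ν (y, z) ∧ ν (y, z + 1) = ν (y, z))
    (hμper : ∀ y z : ℝ, μ (y + 1, z) = μ (y, z) ∧ μ (y, z + 1) = μ (y, z)) :
    (∀ p : ℝ × ℝ × ℝ,
      (∃ e : Module.Basis (Fin 3) ℝ (ℝ × ℝ × ℝ), ∀ i j : Fin 3,
        gNine n θ Λ L ν μ p (e i) (e j)
          = if i = j then (if (i : ℕ) < 2 then 1 else -1) else 0) ∧
      (∀ u : ℝ × ℝ × ℝ, (∀ v : ℝ × ℝ × ℝ, gNine n θ Λ L ν μ p u v = 0) → u = 0)) ∧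
    (∀ φ ∈ Gamma n c₁ c₂, ∀ p u v : ℝ × ℝ × ℝ,
      gNine n θ Λ L ν μ (φ p) (fderiv ℝ (⇑φ) p u) (fderiv ℝ (⇑φ) p v)
        = gNine n θ Λ L ν μ p u v) ∧
    (∀ p : ℝ × ℝ × ℝ, gNine n θ Λ L ν μ p (1, 0, 0) (1, 0, 0) = 0) ∧
    (∀ p v : ℝ × ℝ × ℝ, gNine n θ Λ L ν μ p (1, 0, 0) v = Λ * (v.2.2 - θ * v.2.1)) ∧
    (∀ p u v : ℝ × ℝ × ℝ,
      fderiv ℝ (fun q => gNine n θ Λ L ν μ q (1, 0, 0) v) p u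
        = fderiv ℝ (fun q => gNine n θ Λ L ν μ q (1, 0, 0) u) p v) ∧
    (∀ s : ℝ, ∀ p u v : ℝ × ℝ × ℝ,
      gNine n θ Λ L ν μ (p.1 + s, p.2) u v = gNine n θ Λ L ν μ p u v) :=
  stmt_9_general n c₁ c₂ θ Λ hΛ L ν μ hLpos hLper hνper hμper
end
end

section
/- Let n ∈ ℕ and α, β ∈ ℝ. The diffeomorphism ψ of ℝ³ defined by ψ(x,y,z) = (x + αy + βz, y, z) normalizes the group Γ_n if and only if α ∈ ℤ and β ∈ ℤ. In particular, if θ is an irrational real number, then the map (x,y,z) ↦ (x − βθ·y + β·z, y, z) normalizes Γ_n if and only if β = 0. -/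
noncomputable section

/-! Every element of `Γ_n` is a map `(x,y,z) ↦ (x + ncy + a, y + b, z + c)` with `a, b, c ∈ ℤ`,
and conversely. Conjugating such a map by the shear `(x,y,z) ↦ (x + αy + βz, y, z)` only changes
`a` into `a + αb + βc`. Taking `(a,b,c) = (0,1,0)` and `(0,0,1)` shows that a normalizing shear
has `α, β ∈ ℤ`, and for integral `α, β` the shear and its inverse preserve the integrality of
`(a,b,c)`. In the second statement `α = -βθ` and `β` are both integers only when `β = 0`, since
`θ` is irrational. -/

def heis (n : ℕ) (a b c : ℝ) : Equiv.Perm (ℝ × ℝ × ℝ) :=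
  affMap (fun w => n * c * w.1 + a) (fun _ => b) c

section heis

variable (n : ℕ)

lemma heis_apply (a b c : ℝ) (p : ℝ × ℝ × ℝ) :
    heis n a b c p = (p.1 + (n * c * p.2.1 + a), p.2.1 + b, p.2.2 + c) := rfl

lemma heis_mul (a b c a' b' c' : ℝ) :
    heis n a' b' c' * heis n a b c = heis n (a + a' + n * c' * b) (b + b') (c + c') := by
  ext ⟨x, y, z⟩ <;> simp only [Equiv.Perm.mul_apply, heis_apply] <;> ring

lemma heis_zero : heis n 0 0 0 = 1 := by
  ext ⟨x, y, z⟩ <;> simp [heis_apply]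

lemma heis_inv (a b c : ℝ) : (heis n a b c)⁻¹ = heis n (n * c * b - a) (-b) (-c) := by
  refine inv_eq_of_mul_eq_one_right ?_
  rw [heis_mul, ← heis_zero n]
  congr 1 <;> ring

lemma heis_zpow (a b c : ℝ) (k : ℤ) :
    heis n a b c ^ k = heis n (k * a + n * c * b * (k * (k - 1) / 2)) (k * b) (k * c) := by
  induction k using Int.induction_on with
  | zero => simpa using (heis_zero n).symm
  | succ k ih =>
    rw [zpow_add_one, ih, heis_mul]
    congr 1 <;> push_cast <;> ring
  | pred k ih =>
    rw [zpow_sub_one, ih, heis_inv, heis_mul]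
    congr 1 <;> push_cast <;> ring

lemma heis_inj {a b c a' b' c' : ℝ} :
    heis n a b c = heis n a' b' c' ↔ a = a' ∧ b = b' ∧ c = c' := by
  refine ⟨fun h => ?_, by rintro ⟨rfl, rfl, rfl⟩; rfl⟩
  simpa [heis_apply] using congrArg (fun g : Equiv.Perm (ℝ × ℝ × ℝ) => g (0, 0, 0)) h

def heisLattice : Subgroup (Equiv.Perm (ℝ × ℝ × ℝ)) where
  carrier := {g | ∃ a b c : ℤ, g = heis n a b c}
  one_mem' := ⟨0, 0, 0, by simpa using (heis_zero n).symm⟩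
  mul_mem' := by
    rintro _ _ ⟨a', b', c', rfl⟩ ⟨a, b, c, rfl⟩
    exact ⟨a + a' + n * c' * b, b + b', c + c', by rw [heis_mul]; push_cast; rfl⟩
  inv_mem' := by
    rintro _ ⟨a, b, c, rfl⟩
    exact ⟨n * c * b - a, -b, -c, by rw [heis_inv]; push_cast; rfl⟩

lemma heis_mem_heisLattice (a b c : ℤ) : heis n a b c ∈ heisLattice n := ⟨a, b, c, rfl⟩

lemma Gamma_eq_heisLattice : Gamma n 0 0 = heisLattice n := by
  have gen₁ : affMap (fun _ => 1) (fun _ => 0) 0 = heis n 1 0 0 := by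
    ext ⟨x, y, z⟩ <;> simp [heis_apply, affMap]
  have gen₂ : affMap (fun _ => 0) (fun _ => 1) 0 = heis n 0 1 0 := by
    ext ⟨x, y, z⟩ <;> simp [heis_apply, affMap]
  have gen₃ : affMap (fun q => n * q.1 + 0) (fun _ => 0) 1 = heis n 0 0 1 := by
    ext ⟨x, y, z⟩ <;> simp [heis_apply, affMap]
  have mem : ∀ g ∈ ({heis n 1 0 0, heis n 0 1 0, heis n 0 0 1} : Set _), g ∈ Gamma n 0 0 := by
    intro g hg
    rw [Gamma, gen₁, gen₂, gen₃]
    exact Subgroup.subset_closure hg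
  refine le_antisymm ((Subgroup.closure_le _).2 ?_) ?_
  · rintro g (rfl | rfl | rfl)
    · rw [gen₁]; exact_mod_cast heis_mem_heisLattice n 1 0 0
    · rw [gen₂]; exact_mod_cast heis_mem_heisLattice n 0 1 0
    · rw [gen₃]; exact_mod_cast heis_mem_heisLattice n 0 0 1
  · rintro _ ⟨a, b, c, rfl⟩
    have decomp : heis n a b c =
        heis n 0 0 1 ^ c * (heis n 0 1 0 ^ b * heis n 1 0 0 ^ (a - n * c * b)) := by
      simp only [heis_zpow, heis_mul]
      congr 1 <;> push_cast <;> ring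
    rw [decomp]
    exact mul_mem (zpow_mem (mem _ (by simp)) _)
      (mul_mem (zpow_mem (mem _ (by simp)) _) (zpow_mem (mem _ (by simp)) _))

end heis

def shear (α β : ℝ) : Equiv.Perm (ℝ × ℝ × ℝ) :=
  affMap (fun w => α * w.1 + β * w.2) (fun _ => 0) 0

lemma shear_inv (α β : ℝ) : (shear α β)⁻¹ = shear (-α) (-β) := by
  refine inv_eq_of_mul_eq_one_right ?_
  ext ⟨x, y, z⟩ <;> simp [shear, affMap]
  ring

lemma shear_mul_heis_mul_shear_inv (n : ℕ) (α β a b c : ℝ) :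
    shear α β * heis n a b c * (shear α β)⁻¹ = heis n (a + α * b + β * c) b c := by
  rw [shear_inv]
  ext ⟨x, y, z⟩ <;> simp [shear, affMap, heis_apply]
  ring

lemma shear_mul_mul_shear_inv_mem_heisLattice (n : ℕ) (p q : ℤ) {g : Equiv.Perm (ℝ × ℝ × ℝ)}
    (hg : g ∈ heisLattice n) : shear p q * g * (shear p q)⁻¹ ∈ heisLattice n := by
  obtain ⟨a, b, c, rfl⟩ := hg
  rw [shear_mul_heis_mul_shear_inv]
  exact ⟨a + p * b + q * c, b, c, by push_cast; rfl⟩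

theorem shear_mem_normalizer_Gamma_iff (n : ℕ) (α β : ℝ) :
    shear α β ∈ Subgroup.normalizer (Gamma n 0 0 : Set (Equiv.Perm (ℝ × ℝ × ℝ))) ↔
      (∃ m : ℤ, α = m) ∧ (∃ m : ℤ, β = m) := by
  rw [Subgroup.mem_normalizer_iff, Gamma_eq_heisLattice]
  constructor
  · intro h
    have integral_shift : ∀ b c : ℤ, ∃ m : ℤ, α * b + β * c = m := by
      intro b c
      obtain ⟨a', b', c', hg⟩ := (h _).1 (heis_mem_heisLattice n 0 b c)
      rw [shear_mul_heis_mul_shear_inv] at hg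
      exact ⟨a', by simpa using ((heis_inj n).1 hg).1⟩
    exact ⟨by simpa using integral_shift 1 0, by simpa using integral_shift 0 1⟩
  · rintro ⟨⟨p, rfl⟩, ⟨q, rfl⟩⟩ g
    refine ⟨shear_mul_mul_shear_inv_mem_heisLattice n p q, fun hg => ?_⟩
    have := shear_mul_mul_shear_inv_mem_heisLattice n (-p) (-q) hg
    rw [Int.cast_neg, Int.cast_neg, ← shear_inv, inv_inv] at this
    simpa [mul_assoc] using this

lemma Irrational.exists_intCast_eq_neg_mul_and_iff {θ : ℝ} (hθ : Irrational θ) (β : ℝ) :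
    ((∃ m : ℤ, -(β * θ) = m) ∧ (∃ m : ℤ, β = m)) ↔ β = 0 := by
  constructor
  · rintro ⟨⟨m, hm⟩, ⟨k, rfl⟩⟩
    by_contra hk
    exact (hθ.intCast_mul (by exact_mod_cast hk)).ne_int (-m) (by push_cast; linarith)
  · rintro rfl
    exact ⟨⟨0, by simp⟩, ⟨0, by simp⟩⟩

/-- The shear `ψ(x,y,z) = (x + αy + βz, y, z)` normalizes `Γ_n = Γ_{n,0,0}` iff
`α ∈ ℤ` and `β ∈ ℤ`; in particular for `θ` irrational, `(x,y,z) ↦ (x − βθy + βz, y, z)`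
normalizes `Γ_n` iff `β = 0`. -/
theorem stmt_12 (n : ℕ) :
    (∀ α β : ℝ,
      affMap (fun w => α * w.1 + β * w.2) (fun _ => 0) 0 ∈ Subgroup.normalizer (Gamma n 0 0 : Set (Equiv.Perm (ℝ × ℝ × ℝ))) ↔
        (∃ m : ℤ, α = m) ∧ (∃ m : ℤ, β = m)) ∧
    ∀ θ : ℝ, Irrational θ → ∀ β : ℝ,
      (affMap (fun w => -(β * θ) * w.1 + β * w.2) (fun _ => 0) 0 ∈ Subgroup.normalizer (Gamma n 0 0 : Set (Equiv.Perm (ℝ × ℝ × ℝ)))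
        ↔ β = 0) :=
  ⟨shear_mem_normalizer_Gamma_iff n, fun θ hθ β =>
    (shear_mem_normalizer_Gamma_iff n _ _).trans (hθ.exists_intCast_eq_neg_mul_and_iff β)⟩
end
end

section
/- Let n be a positive integer, θ an irrational real number, Λ > 0 and L > 0 constants, and μ : ℝ → ℝ a smooth 1-periodic function. Set α = dx − nz·dy and γ = dz − θ·dy, and define the smooth field of symmetric bilinear forms g̃ = Λ(α⊗γ + γ⊗α) + L²·dy⊗dy + μ(y)·γ⊗γ on ℝ³. Then: (i) g̃ is invariant under Γ_n; (ii) the diffeomorphism φ₀ of ℝ³ defined by φ₀(x,y,z) = (x + z, y, z + θ/n) normalizes Γ_n; (iii) φ₀*g̃ = g̃ + 2Λ·γ⊗γ, i.e. φ₀*g̃ = g̃ + (2/Λ)·ω⊗ω where ω = g̃(∂x, ·) = Λ(dz − θdy); in particular φ₀*g̃ ≠ g̃, so φ₀ is not an isometry of g̃. -/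
noncomputable section

/-- The metric `g̃ = Λ(α⊗γ + γ⊗α) + L²·dy⊗dy + μ(y)·γ⊗γ` with `α = dx − nz·dy`,
`γ = dz − θ·dy` and constants `Λ, L`. -/
def gThirteen (n : ℕ) (θ Λ L : ℝ) (μ : ℝ → ℝ) (p u v : ℝ × ℝ × ℝ) : ℝ :=
  Λ * ((u.1 - n * p.2.2 * u.2.1) * (v.2.2 - θ * v.2.1)
      + (u.2.2 - θ * u.2.1) * (v.1 - n * p.2.2 * v.2.1))
    + L ^ 2 * u.2.1 * v.2.1
    + μ p.2.1 * ((u.2.2 - θ * u.2.1) * (v.2.2 - θ * v.2.1))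
/-!
Every element of `Γ_n` is an affine map `(x, y, z) ↦ (x + nky + a, y + b, z + k)` with
`a, b, k ∈ ℤ`. Its differential adds `nk·dy` to `dx`, which exactly compensates the shift of `z`
in `α = dx − nz·dy`; `γ` is unchanged and `μ(y)` is `1`-periodic, so `g̃` is invariant.
Conjugation by `φ₀` sends the parameters `(a, b, k)` to `(a + k, b, k)`, so `φ₀` normalizes `Γ_n`.
Finally `φ₀*α = d(x + z) − n(z + θ/n)·dy = α + γ` and `φ₀*γ = γ`, whence `φ₀*g̃ = g̃ + 2Λ·γ⊗γ`.
-/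

theorem fderiv_affMap_apply {φ : ℝ × ℝ → ℝ} {ψ : ℝ → ℝ} {φ' : ℝ × ℝ →L[ℝ] ℝ} {ψ' : ℝ}
    {p : ℝ × ℝ × ℝ} (b : ℝ) (hφ : HasFDerivAt φ φ' p.2) (hψ : HasDerivAt ψ ψ' p.2.2)
    (u : ℝ × ℝ × ℝ) :
    fderiv ℝ (affMap φ ψ b) p u = (u.1 + φ' u.2, u.2.1 + ψ' * u.2.2, u.2.2) := by
  have hsnd : HasFDerivAt (𝕜 := ℝ) (Prod.snd : ℝ × ℝ × ℝ → ℝ × ℝ) _ p := hasFDerivAt_snd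
  have hx := hasFDerivAt_fst.add (hφ.comp p hsnd)
  have hy := hsnd.fst.add (hψ.hasFDerivAt.comp p hsnd.snd)
  have hz := hsnd.snd.add_const b
  have h : HasFDerivAt (affMap φ ψ b) _ p := hx.prodMk (hy.prodMk hz)
  rw [h.fderiv]
  simp [mul_comm]

def gammaElem (n : ℕ) (a b k : ℤ) : Equiv.Perm (ℝ × ℝ × ℝ) :=
  affMap (fun q => n * k * q.1 + a) (fun _ => b) k

section gammaElem

variable (n : ℕ)

theorem gammaElem_apply (a b k : ℤ) (p : ℝ × ℝ × ℝ) :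
    gammaElem n a b k p = (p.1 + n * k * p.2.1 + a, p.2.1 + b, p.2.2 + k) := by
  simp only [gammaElem, affMap, Equiv.coe_fn_mk, Prod.mk.injEq, and_true]
  ring

theorem gammaElem_mul (a b k a' b' k' : ℤ) :
    gammaElem n a b k * gammaElem n a' b' k' =
      gammaElem n (a + a' + n * k * b') (b + b') (k + k') := by
  ext p <;> simp only [Equiv.Perm.coe_mul, Function.comp_apply, gammaElem_apply] <;> push_cast <;>
    ring

theorem gammaElem_zero : gammaElem n 0 0 0 = 1 := by
  ext p <;> simp [gammaElem_apply]

theorem gammaElem_inv (a b k : ℤ) :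
    (gammaElem n a b k)⁻¹ = gammaElem n (n * k * b - a) (-b) (-k) :=
  inv_eq_of_mul_eq_one_right <| by rw [gammaElem_mul, ← gammaElem_zero n]; congr 1 <;> ring

theorem gammaElem_zpow {a b k : ℤ} (hkb : k * b = 0) (m : ℤ) :
    gammaElem n a b k ^ m = gammaElem n (m * a) (m * b) (m * k) := by
  induction m using Int.induction_on with
  | zero => simp [gammaElem_zero]
  | succ m ih =>
    rw [zpow_add_one, ih, gammaElem_mul]
    congr 1
    · linear_combination (n * m : ℤ) * hkb
    all_goals ring
  | pred m ih =>
    rw [zpow_sub_one, ih, gammaElem_inv, gammaElem_mul]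
    congr 1
    · linear_combination (n * (m + 1) : ℤ) * hkb
    all_goals ring

def gammaSubgroup : Subgroup (Equiv.Perm (ℝ × ℝ × ℝ)) where
  carrier := {φ | ∃ a b k : ℤ, φ = gammaElem n a b k}
  one_mem' := ⟨0, 0, 0, (gammaElem_zero n).symm⟩
  mul_mem' := by
    rintro _ _ ⟨a, b, k, rfl⟩ ⟨a', b', k', rfl⟩
    exact ⟨_, _, _, gammaElem_mul n a b k a' b' k'⟩
  inv_mem' := by
    rintro _ ⟨a, b, k, rfl⟩
    exact ⟨_, _, _, gammaElem_inv n a b k⟩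

theorem Gamma_eq_gammaSubgroup : Gamma n 0 0 = gammaSubgroup n := by
  have hx : affMap (fun _ => 1) (fun _ => 0) 0 = gammaElem n 1 0 0 := by
    ext p <;> simp [gammaElem_apply, affMap]
  have hy : affMap (fun _ => 0) (fun _ => 1) 0 = gammaElem n 0 1 0 := by
    ext p <;> simp [gammaElem_apply, affMap]
  have hz : affMap (fun q => n * q.1 + 0) (fun _ => 0) 1 = gammaElem n 0 0 1 := by
    ext p <;> simp [gammaElem_apply, affMap]
  apply le_antisymm
  · rw [Gamma, Subgroup.closure_le]
    rintro φ (rfl | rfl | rfl)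
    exacts [⟨1, 0, 0, hx⟩, ⟨0, 1, 0, hy⟩, ⟨0, 0, 1, hz⟩]
  · rintro _ ⟨a, b, k, rfl⟩
    have hgen : ∀ g ∈ ({gammaElem n 1 0 0, gammaElem n 0 1 0, gammaElem n 0 0 1} : Set _),
        ∀ m : ℤ, g ^ m ∈ Gamma n 0 0 := by
      rw [← hx, ← hy, ← hz]
      exact fun g hg m => zpow_mem (Subgroup.subset_closure hg) m
    have hprod : gammaElem n a b k
        = gammaElem n 1 0 0 ^ a * gammaElem n 0 1 0 ^ b * gammaElem n 0 0 1 ^ k := by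
      simp only [gammaElem_zpow n (mul_zero _), gammaElem_zpow n (zero_mul _), gammaElem_mul]
      congr 1 <;> ring
    rw [hprod]
    refine mul_mem (mul_mem (hgen _ ?_ a) (hgen _ ?_ b)) (hgen _ ?_ k) <;> simp

end gammaElem

/-- The map `φ₀` of the statement is `shearTranslate (θ / n)`. -/
def shearTranslate (t : ℝ) : Equiv.Perm (ℝ × ℝ × ℝ) :=
  affMap (fun w => w.2) (fun _ => 0) t

theorem shearTranslate_mul_gammaElem (n : ℕ) (t : ℝ) (a b k : ℤ) :
    shearTranslate t * gammaElem n a b k = gammaElem n (a + k) b k * shearTranslate t := by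
  ext p <;> simp [shearTranslate, affMap, gammaElem_apply] <;> ring

theorem shearTranslate_mem_normalizer (n : ℕ) (t : ℝ) :
    shearTranslate t ∈ Subgroup.normalizer (Gamma n 0 0 : Set (Equiv.Perm (ℝ × ℝ × ℝ))) := by
  rw [Gamma_eq_gammaSubgroup, Subgroup.mem_normalizer_iff]
  intro h
  constructor
  · rintro ⟨a, b, k, rfl⟩
    exact ⟨a + k, b, k, mul_inv_eq_of_eq_mul (shearTranslate_mul_gammaElem n t a b k)⟩
  · rintro ⟨a, b, k, hconj⟩
    refine ⟨a - k, b, k, mul_left_cancel (a := shearTranslate t) ?_⟩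
    rw [shearTranslate_mul_gammaElem, sub_add_cancel, ← hconj, inv_mul_cancel_right]

section pullback

variable (n : ℕ) (θ Λ L : ℝ) (μ : ℝ → ℝ)

theorem gThirteen_pullback_gammaElem (hμ : Function.Periodic μ 1) (a b k : ℤ)
    (p u v : ℝ × ℝ × ℝ) :
    gThirteen n θ Λ L μ (gammaElem n a b k p) (fderiv ℝ (gammaElem n a b k) p u)
      (fderiv ℝ (gammaElem n a b k) p v) = gThirteen n θ Λ L μ p u v := by
  have hφ : HasFDerivAt (fun q : ℝ × ℝ => n * k * q.1 + a) _ p.2 :=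
    ((hasFDerivAt_fst (𝕜 := ℝ) (p := p.2)).const_mul _).add_const _
  have hμb : μ (p.2.1 + b) = μ p.2.1 := by simpa using hμ.int_mul b p.2.1
  rw [gammaElem_apply]
  simp only [gammaElem, fderiv_affMap_apply _ hφ (hasDerivAt_const _ _), gThirteen, hμb,
    smul_apply, ContinuousLinearMap.coe_fst', smul_eq_mul]
  ring

theorem gThirteen_pullback_shearTranslate (hn : n ≠ 0) (p u v : ℝ × ℝ × ℝ) :
    gThirteen n θ Λ L μ (shearTranslate (θ / n) p) (fderiv ℝ (shearTranslate (θ / n)) p u)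
        (fderiv ℝ (shearTranslate (θ / n)) p v)
      = gThirteen n θ Λ L μ p u v + 2 * Λ * ((u.2.2 - θ * u.2.1) * (v.2.2 - θ * v.2.1)) := by
  rw [shearTranslate, fderiv_affMap_apply _ hasFDerivAt_snd (hasDerivAt_const _ _),
    fderiv_affMap_apply _ hasFDerivAt_snd (hasDerivAt_const _ _)]
  simp only [gThirteen, affMap, Equiv.coe_fn_mk, ContinuousLinearMap.coe_snd', add_zero, zero_mul]
  field_simp
  ring

theorem gThirteen_unit_x_left (p v : ℝ × ℝ × ℝ) :
    gThirteen n θ Λ L μ p (1, 0, 0) v = Λ * (v.2.2 - θ * v.2.1) := by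
  simp only [gThirteen]
  ring

end pullback

theorem stmt_13_general (n : ℕ) (hn : 0 < n) (θ : ℝ)
    (Λ L : ℝ) (hΛ : 0 < Λ)
    (μ : ℝ → ℝ) (hμper : ∀ y : ℝ, μ (y + 1) = μ y) :
    (∀ φ ∈ Gamma n 0 0, ∀ p u v : ℝ × ℝ × ℝ,
      gThirteen n θ Λ L μ (φ p) (fderiv ℝ (⇑φ) p u) (fderiv ℝ (⇑φ) p v)
        = gThirteen n θ Λ L μ p u v) ∧
    (affMap (fun w => w.2) (fun _ => 0) (θ / n) ∈ Subgroup.normalizer (Gamma n 0 0 : Set (Equiv.Perm (ℝ × ℝ × ℝ)))) ∧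
    (∀ p v : ℝ × ℝ × ℝ, gThirteen n θ Λ L μ p (1, 0, 0) v = Λ * (v.2.2 - θ * v.2.1)) ∧
    (∀ p u v : ℝ × ℝ × ℝ,
      gThirteen n θ Λ L μ (affMap (fun w => w.2) (fun _ => 0) (θ / n) p)
          (fderiv ℝ (⇑(affMap (fun w => w.2) (fun _ => 0) (θ / n))) p u)
          (fderiv ℝ (⇑(affMap (fun w => w.2) (fun _ => 0) (θ / n))) p v)
        = gThirteen n θ Λ L μ p u v
          + 2 * Λ * ((u.2.2 - θ * u.2.1) * (v.2.2 - θ * v.2.1))) ∧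
    (∃ p u v : ℝ × ℝ × ℝ,
      gThirteen n θ Λ L μ (affMap (fun w => w.2) (fun _ => 0) (θ / n) p)
          (fderiv ℝ (⇑(affMap (fun w => w.2) (fun _ => 0) (θ / n))) p u)
          (fderiv ℝ (⇑(affMap (fun w => w.2) (fun _ => 0) (θ / n))) p v)
        ≠ gThirteen n θ Λ L μ p u v) := by
  have hpullback := gThirteen_pullback_shearTranslate n θ Λ L μ hn.ne'
  refine ⟨?_, shearTranslate_mem_normalizer n (θ / n), gThirteen_unit_x_left n θ Λ L μ,
    hpullback, ⟨0, (0, 0, 1), (0, 0, 1), fun hiso => ?_⟩⟩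
  · intro φ hφ
    rw [Gamma_eq_gammaSubgroup] at hφ
    obtain ⟨a, b, k, rfl⟩ := hφ
    exact gThirteen_pullback_gammaElem n θ Λ L μ hμper a b k
  · have hγγ := (hpullback 0 (0, 0, 1) (0, 0, 1)).symm.trans hiso
    norm_num at hγγ
    exact hΛ.ne' hγγ

/-- For `n > 0`, `θ` irrational, `Λ, L > 0` and `μ` smooth 1-periodic:
(i) `g̃` is `Γ_n`-invariant; (ii) `φ₀ : (x,y,z) ↦ (x+z, y, z+θ/n)` normalizes `Γ_n`;
(iii) `φ₀*g̃ = g̃ + 2Λ·γ⊗γ` where `γ = dz − θ·dy` and `g̃(∂x,·) = Λ(dz − θdy)`;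
in particular `φ₀*g̃ ≠ g̃`, so `φ₀` is not an isometry of `g̃`. -/
theorem stmt_13 (n : ℕ) (hn : 0 < n) (θ : ℝ) (hθ : Irrational θ)
    (Λ L : ℝ) (hΛ : 0 < Λ) (hL : 0 < L)
    (μ : ℝ → ℝ) (hμs : ContDiff ℝ (⊤ : ℕ∞) μ) (hμper : ∀ y : ℝ, μ (y + 1) = μ y) :
    (∀ φ ∈ Gamma n 0 0, ∀ p u v : ℝ × ℝ × ℝ,
      gThirteen n θ Λ L μ (φ p) (fderiv ℝ (⇑φ) p u) (fderiv ℝ (⇑φ) p v)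
        = gThirteen n θ Λ L μ p u v) ∧
    (affMap (fun w => w.2) (fun _ => 0) (θ / n) ∈ Subgroup.normalizer (Gamma n 0 0 : Set (Equiv.Perm (ℝ × ℝ × ℝ)))) ∧
    (∀ p v : ℝ × ℝ × ℝ, gThirteen n θ Λ L μ p (1, 0, 0) v = Λ * (v.2.2 - θ * v.2.1)) ∧
    (∀ p u v : ℝ × ℝ × ℝ,
      gThirteen n θ Λ L μ (affMap (fun w => w.2) (fun _ => 0) (θ / n) p)
          (fderiv ℝ (⇑(affMap (fun w => w.2) (fun _ => 0) (θ / n))) p u)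
          (fderiv ℝ (⇑(affMap (fun w => w.2) (fun _ => 0) (θ / n))) p v)
        = gThirteen n θ Λ L μ p u v
          + 2 * Λ * ((u.2.2 - θ * u.2.1) * (v.2.2 - θ * v.2.1))) ∧
    (∃ p u v : ℝ × ℝ × ℝ,
      gThirteen n θ Λ L μ (affMap (fun w => w.2) (fun _ => 0) (θ / n) p)
          (fderiv ℝ (⇑(affMap (fun w => w.2) (fun _ => 0) (θ / n))) p u)
          (fderiv ℝ (⇑(affMap (fun w => w.2) (fun _ => 0) (θ / n))) p v)
        ≠ gThirteen n θ Λ L μ p u v) :=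
  stmt_13_general n hn θ Λ L hΛ μ hμper
end
end

section
/- Let n ∈ ℕ, θ ∈ ℝ, Λ ≠ 0, L > 0 and k real constants, and μ : ℝ² → ℝ a smooth ℤ²-periodic function. Set α = dx − nz·dy and γ = dz − θ·dy, and define g̃ = Λ(α⊗γ + γ⊗α) + L²·dy⊗dy + k(dy⊗γ + γ⊗dy) + μ(y,z)·γ⊗γ on ℝ³. For s ∈ ℝ let Φˢ(x,y,z) = (x + snz, y + s, z) (the time-s flow of the vector field ∂y + nz∂x). Then (Φˢ)*g̃ = Λ(α⊗γ + γ⊗α) + L²·dy⊗dy + (k + θnsΛ)(dy⊗γ + γ⊗dy) + (μ(y+s, z) + 2nsΛ)·γ⊗γ. Equivalently, in the frame (∂x, ∂y + nz∂x + θ∂z, ∂z), the Gram matrix of (Φˢ)*g̃ is [[0,0,Λ],[0,L²,k+θnsΛ],[Λ,k+θnsΛ,μ(y+s,z)+2nsΛ]]. -/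
noncomputable section

/-- The metric `g̃ = Λ(α⊗γ + γ⊗α) + L²·dy⊗dy + k(dy⊗γ + γ⊗dy) + μ(y,z)·γ⊗γ`
with `α = dx − nz·dy` and `γ = dz − θ·dy`. -/
def gSixteen (n : ℕ) (θ Λ L k : ℝ) (μ : ℝ × ℝ → ℝ) (p u v : ℝ × ℝ × ℝ) : ℝ :=
  Λ * ((u.1 - n * p.2.2 * u.2.1) * (v.2.2 - θ * v.2.1)
      + (u.2.2 - θ * u.2.1) * (v.1 - n * p.2.2 * v.2.1))
    + L ^ 2 * u.2.1 * v.2.1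
    + k * (u.2.1 * (v.2.2 - θ * v.2.1) + (u.2.2 - θ * u.2.1) * v.2.1)
    + μ p.2 * ((u.2.2 - θ * u.2.1) * (v.2.2 - θ * v.2.1))

/-- The time-`s` flow `Φˢ(x,y,z) = (x + snz, y + s, z)` of `∂y + nz∂x`. -/
def flowU (n : ℕ) (s : ℝ) : ℝ × ℝ × ℝ → ℝ × ℝ × ℝ :=
  fun p => (p.1 + s * (n : ℝ) * p.2.2, p.2.1 + s, p.2.2)

/-- The derivative of `flowU` as a continuous linear map. -/
def flowUDeriv (n : ℕ) (s : ℝ) : (ℝ × ℝ × ℝ) →L[ℝ] (ℝ × ℝ × ℝ) :=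
  ((ContinuousLinearMap.fst ℝ ℝ (ℝ × ℝ)) +
    (s * (n : ℝ)) • ((ContinuousLinearMap.snd ℝ ℝ ℝ).comp
      (ContinuousLinearMap.snd ℝ ℝ (ℝ × ℝ)))).prod
    (ContinuousLinearMap.snd ℝ ℝ (ℝ × ℝ))

lemma flowUDeriv_apply (n : ℕ) (s : ℝ) (u : ℝ × ℝ × ℝ) :
    flowUDeriv n s u = (u.1 + s * (n : ℝ) * u.2.2, u.2.1, u.2.2) := by
  simp [flowUDeriv, mul_comm, mul_assoc]

lemma fderiv_flowU (n : ℕ) (s : ℝ) (p : ℝ × ℝ × ℝ) :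
    fderiv ℝ (flowU n s) p = flowUDeriv n s := by
  have hfun : flowU n s = fun p : ℝ × ℝ × ℝ =>
      flowUDeriv n s p + ((0 : ℝ), s, (0 : ℝ)) := by
    funext p
    simp [flowU, flowUDeriv_apply, Prod.ext_iff]
  have : HasFDerivAt (flowU n s) (flowUDeriv n s) p := by
    rw [hfun]
    exact (flowUDeriv n s).hasFDerivAt.add_const _
  exact this.fderiv

/-- Pullback computation: `(Φˢ)*g̃` is the metric of the same form with `k` replaced by
`k + θnsΛ` and `μ(y,z)` replaced by `μ(y+s,z) + 2nsΛ`. -/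
theorem stmt_16 (n : ℕ) (θ Λ L k : ℝ) (hΛ : Λ ≠ 0) (hL : 0 < L)
    (μ : ℝ × ℝ → ℝ) (hμs : ContDiff ℝ (⊤ : ℕ∞) μ)
    (hμper : ∀ y z : ℝ, μ (y + 1, z) = μ (y, z) ∧ μ (y, z + 1) = μ (y, z))
    (s : ℝ) :
    ∀ p u v : ℝ × ℝ × ℝ,
      gSixteen n θ Λ L k μ (flowU n s p)
          (fderiv ℝ (flowU n s) p u) (fderiv ℝ (flowU n s) p v)
        = gSixteen n θ Λ L (k + θ * n * s * Λ)
            (fun w => μ (w.1 + s, w.2) + 2 * n * s * Λ) p u v := by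
  intro p u v
  rw [fderiv_flowU]
  simp only [gSixteen, flowU, flowUDeriv_apply]
  ring
end
end
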